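/- arXiv:2502.01790 — 13 statements merged into one kernel-verified Lean document; each statement's English description precedes it below -/
import Mathlib

section
/- Let F be a set functor and Λ an F-relator such that for all functions f : X → A and g : Y → A one has (Fg)° · Ff ≤ Λ(g° · f). Then Λ-similarity is complete: for all F-coalgebras (X,α), (Y,β) and all states x ∈ X, y ∈ Y, if x and y are behaviourally equivalent then x and y are Λ-similar. -/
open CategoryTheory Function

universe u

/-- Applicative composition of relations: `relComp s r = s · r`. -/
def relComp {X Y Z : Type u} (s : Y → Z → Prop) (r : X → Y → Prop) : X → Z → Prop :=
  fun x z => ∃ y, r x y ∧ s y z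

/-- Converse of a relation. -/
def relConv {X Y : Type u} (r : X → Y → Prop) : Y → X → Prop := fun y x => r x y

/-- Graph relation of a function. -/
def fgraph {X Y : Type u} (f : X → Y) : X → Y → Prop := fun x y => f x = y

/-- An `F`-relator: a monotone assignment of relations `F X ⇸ F Y` to relations `X ⇸ Y`. -/
structure Relator (F : Type u ⥤ Type u) : Type (u + 1) where
  map : ∀ {X Y : Type u}, (X → Y → Prop) → (F.obj X → F.obj Y → Prop)
  mono : ∀ {X Y : Type u} {r s : X → Y → Prop}, (∀ x y, r x y → s x y) →
    ∀ u v, map r u v → map s u v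

/-- `f` is a coalgebra homomorphism from `(X, α)` to `(Y, β)`. -/
def IsCoalgHom (F : Type u ⥤ Type u) {X Y : Type u} (α : X → F.obj X) (β : Y → F.obj Y)
    (f : X → Y) : Prop :=
  ∀ x, β (f x) = F.map (TypeCat.ofHom f) (α x)

/-- Behavioural equivalence of states. -/
def BehEq (F : Type u ⥤ Type u) {X Y : Type u} (α : X → F.obj X) (β : Y → F.obj Y)
    (x : X) (y : Y) : Prop :=
  ∃ (Z : Type u) (γ : Z → F.obj Z) (f : X → Z) (g : Y → Z),
    IsCoalgHom F α γ f ∧ IsCoalgHom F β γ g ∧ f x = g y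

/-- `r` is a `Λ`-simulation from `(X, α)` to `(Y, β)`: `r ≤ β° · Λr · α`. -/
def IsSimulation {F : Type u ⥤ Type u} (Λ : Relator F) {X Y : Type u}
    (α : X → F.obj X) (β : Y → F.obj Y) (r : X → Y → Prop) : Prop :=
  ∀ x y, r x y → Λ.map r (α x) (β y)

/-- `x` and `y` are `Λ`-similar: related by some `Λ`-simulation. -/
def RelSimilar {F : Type u ⥤ Type u} (Λ : Relator F) {X Y : Type u}
    (α : X → F.obj X) (β : Y → F.obj Y) (x : X) (y : Y) : Prop :=
  ∃ r, IsSimulation Λ α β r ∧ r x y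

theorem isSimulation_of_isCoalgHom {F : Type u ⥤ Type u} (Λ : Relator F)
    {X Y Z : Type u} {α : X → F.obj X} {β : Y → F.obj Y} {γ : Z → F.obj Z} {f : X → Z}
    {g : Y → Z}
    (hcomp : ∀ u v, F.map (TypeCat.ofHom f) u = F.map (TypeCat.ofHom g) v →
      Λ.map (fun x y => f x = g y) u v)
    (hf : IsCoalgHom F α γ f) (hg : IsCoalgHom F β γ g) :
    IsSimulation Λ α β (fun x y => f x = g y) :=
  fun x y hxy => hcomp (α x) (β y) (by rw [← hf, ← hg, hxy])

/-- If an `F`-relator `Λ` satisfies `(Fg)° · Ff ≤ Λ(g° · f)` for all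
functions `f : X → A`, `g : Y → A`, then `Λ`-similarity is complete: behaviourally
equivalent states are `Λ`-similar. -/
theorem stmt0 (F : Type u ⥤ Type u) (Λ : Relator F)
    (hcomp : ∀ {X Y A : Type u} (f : X → A) (g : Y → A) (u : F.obj X) (v : F.obj Y),
      F.map (TypeCat.ofHom f) u = F.map (TypeCat.ofHom g) v → Λ.map (fun x y => f x = g y) u v)
    {X Y : Type u} (α : X → F.obj X) (β : Y → F.obj Y) (x : X) (y : Y)
    (h : BehEq F α β x y) : RelSimilar Λ α β x y := by
  obtain ⟨Z, γ, f, g, hf, hg, hxy⟩ := h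
  exact ⟨_, isSimulation_of_isCoalgHom Λ (hcomp f g) hf hg, hxy⟩
end

section
/- Let F be a set functor and Λ an F-relator that maps difunctional relations to difunctional relations and such that for every jointly surjective cospan of functions (f : X → A, g : Y → A) one has Λ(g° · f) ≤ (Fg)° · Ff. Then Λ-similarity is sound: for all F-coalgebras (X,α), (Y,β) and all states x ∈ X, y ∈ Y, if x and y are Λ-similar then x and y are behaviourally equivalent. -/
open CategoryTheory Function

universe u

/-- A relation is difunctional if it is of the form `g° · f` for functions `f`, `g`. -/
def IsDifunctional {X Y : Type u} (r : X → Y → Prop) : Prop :=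
  ∃ (Z : Type u) (f : X → Z) (g : Y → Z), ∀ x y, r x y ↔ f x = g y

/-!
Glue `X` and `Y` along the simulation `r`: the quotient `Z` of `X ⊕ Y` by `r` is the pushout
of `r`, so its injections `f, g` form a jointly surjective cospan with `r ≤ g° · f`. By
monotonicity and the cospan condition, `r x y` forces `Ff (α x) = Fg (β y)`, which is exactly
what is needed for `Ff ∘ α` and `Fg ∘ β` to descend to a coalgebra structure on `Z` making
`f` and `g` homomorphisms.
-/

/-- The condition `Λ(g° · f) ≤ (Fg)° · Ff` for all jointly surjective cospans `(f, g)`. -/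
def Relator.LeKernelOfJointlySurjective {F : Type u ⥤ Type u} (Λ : Relator F) : Prop :=
  ∀ {X Y A : Type u} (f : X → A) (g : Y → A),
    (∀ a, (∃ x, f x = a) ∨ (∃ y, g y = a)) →
    ∀ (u : F.obj X) (v : F.obj Y),
      Λ.map (fun x y => f x = g y) u v → F.map (TypeCat.ofHom f) u = F.map (TypeCat.ofHom g) v

namespace RelPushout

variable {X Y : Type u}

def sumRel (r : X → Y → Prop) : X ⊕ Y → X ⊕ Y → Prop
  | .inl x, .inr y => r x y
  | _, _ => False

def inl (r : X → Y → Prop) (x : X) : Quot (sumRel r) := Quot.mk _ (.inl x)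

def inr (r : X → Y → Prop) (y : Y) : Quot (sumRel r) := Quot.mk _ (.inr y)

theorem inl_eq_inr {r : X → Y → Prop} {x : X} {y : Y} (h : r x y) : inl r x = inr r y :=
  Quot.sound h

theorem inl_or_inr (r : X → Y → Prop) (a : Quot (sumRel r)) :
    (∃ x, inl r x = a) ∨ (∃ y, inr r y = a) := by
  induction a using Quot.ind with
  | mk s =>
    cases s with
    | inl x => exact .inl ⟨x, rfl⟩
    | inr y => exact .inr ⟨y, rfl⟩

variable {F : Type u ⥤ Type u} {Λ : Relator F} {α : X → F.obj X} {β : Y → F.obj Y}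
  {r : X → Y → Prop}

theorem map_inl_eq_map_inr (hΛ : Λ.LeKernelOfJointlySurjective) (hr : IsSimulation Λ α β r)
    {x : X} {y : Y} (hxy : r x y) :
    F.map (TypeCat.ofHom (inl r)) (α x) = F.map (TypeCat.ofHom (inr r)) (β y) :=
  hΛ _ _ (inl_or_inr r) _ _ (Λ.mono (fun _ _ => inl_eq_inr) _ _ (hr x y hxy))

def coalg (hΛ : Λ.LeKernelOfJointlySurjective) (hr : IsSimulation Λ α β r) :
    Quot (sumRel r) → F.obj (Quot (sumRel r)) :=
  Quot.lift (Sum.elim (fun x => F.map (TypeCat.ofHom (inl r)) (α x))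
      (fun y => F.map (TypeCat.ofHom (inr r)) (β y))) <| by
    rintro (x | y) (x' | y') h
    · exact h.elim
    · exact map_inl_eq_map_inr hΛ hr h
    · exact h.elim
    · exact h.elim

theorem isCoalgHom_inl (hΛ : Λ.LeKernelOfJointlySurjective) (hr : IsSimulation Λ α β r) :
    IsCoalgHom F α (coalg hΛ hr) (inl r) :=
  fun _ => rfl

theorem isCoalgHom_inr (hΛ : Λ.LeKernelOfJointlySurjective) (hr : IsSimulation Λ α β r) :
    IsCoalgHom F β (coalg hΛ hr) (inr r) :=
  fun _ => rfl

end RelPushout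

theorem behEq_of_isSimulation {F : Type u ⥤ Type u} {Λ : Relator F}
    (hΛ : Λ.LeKernelOfJointlySurjective) {X Y : Type u} {α : X → F.obj X} {β : Y → F.obj Y}
    {r : X → Y → Prop} (hr : IsSimulation Λ α β r) {x : X} {y : Y} (hxy : r x y) :
    BehEq F α β x y :=
  ⟨_, RelPushout.coalg hΛ hr, RelPushout.inl r, RelPushout.inr r,
    RelPushout.isCoalgHom_inl hΛ hr, RelPushout.isCoalgHom_inr hΛ hr, RelPushout.inl_eq_inr hxy⟩

theorem stmt1_general (F : Type u ⥤ Type u) (Λ : Relator F)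
    (hcos : ∀ {X Y A : Type u} (f : X → A) (g : Y → A),
      (∀ a, (∃ x, f x = a) ∨ (∃ y, g y = a)) →
      ∀ (u : F.obj X) (v : F.obj Y),
        Λ.map (fun x y => f x = g y) u v → F.map (TypeCat.ofHom f) u = F.map (TypeCat.ofHom g) v)
    {X Y : Type u} (α : X → F.obj X) (β : Y → F.obj Y) (x : X) (y : Y)
    (h : RelSimilar Λ α β x y) : BehEq F α β x y := by
  obtain ⟨r, hr, hxy⟩ := h
  exact behEq_of_isSimulation hcos hr hxy

/-- If an `F`-relator `Λ` maps difunctional relations to difunctional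
relations and satisfies `Λ(g° · f) ≤ (Fg)° · Ff` for every jointly surjective cospan
`(f : X → A, g : Y → A)`, then `Λ`-similarity is sound: `Λ`-similar states are
behaviourally equivalent. -/
theorem stmt1 (F : Type u ⥤ Type u) (Λ : Relator F)
    (hdif : ∀ {X Y : Type u} (r : X → Y → Prop),
      IsDifunctional r → IsDifunctional (Λ.map r))
    (hcos : ∀ {X Y A : Type u} (f : X → A) (g : Y → A),
      (∀ a, (∃ x, f x = a) ∨ (∃ y, g y = a)) →
      ∀ (u : F.obj X) (v : F.obj Y),
        Λ.map (fun x y => f x = g y) u v → F.map (TypeCat.ofHom f) u = F.map (TypeCat.ofHom g) v)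
    {X Y : Type u} (α : X → F.obj X) (β : Y → F.obj Y) (x : X) (y : Y)
    (h : RelSimilar Λ α β x y) : BehEq F α β x y :=
  stmt1_general F Λ hcos α β x y h
end

section
/- Let F be a set functor and Λ an F-relator. Then: (1) the class of Λ-simulations contains, for every pair of F-coalgebras, all coalgebra homomorphisms and their converses (as graph relations) if and only if for every function f with non-empty domain, Ff ≤ Λf and (Ff)° ≤ Λ(f°); (2) the class of Λ-simulations is closed under relational composition if and only if for all relations r : X ⇸ Y and s : Y ⇸ Z such that s · r is non-empty, Λs · Λr ≤ Λ(s · r); (3) the class of Λ-simulations is closed under converses if and only if for every non-empty relation r : X ⇸ Y, Λ(r°) = (Λr)°. -/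
open CategoryTheory Function

universe u

/-- `x` and `y` are `Λ`-similar: related by some `Λ`-simulation. -/
def LambdaSimilar {F : Type u ⥤ Type u} (Λ : Relator F) {X Y : Type u}
    (α : X → F.obj X) (β : Y → F.obj Y) (x : X) (y : Y) : Prop :=
  ∃ r, IsSimulation Λ α β r ∧ r x y

/-!
Every condition on `Λ` is recovered by testing simulations between constant coalgebras
`fun _ => u` and `fun _ => v`: on these, a relation `r` is a `Λ`-simulation exactly when
`Λ.map r u v` holds or `r` is empty. The empty relation is a simulation between any two
coalgebras, which is why each characterization only constrains non-empty relations.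
-/

def SimulationsContainHoms {F : Type u ⥤ Type u} (Λ : Relator F) : Prop :=
  ∀ (X Y : Type u) (α : X → F.obj X) (β : Y → F.obj Y) (f : X → Y),
    IsCoalgHom F α β f →
      IsSimulation Λ α β (fgraph f) ∧ IsSimulation Λ β α (relConv (fgraph f))

def Relator.ExtendsFunctor {F : Type u ⥤ Type u} (Λ : Relator F) : Prop :=
  ∀ (X Y : Type u) (f : X → Y), Nonempty X →
    (∀ (u : F.obj X) (v : F.obj Y), F.map (TypeCat.ofHom f) u = v → Λ.map (fgraph f) u v) ∧
    (∀ (v : F.obj Y) (u : F.obj X), F.map (TypeCat.ofHom f) u = v →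
      Λ.map (relConv (fgraph f)) v u)

def SimulationsClosedUnderComp {F : Type u ⥤ Type u} (Λ : Relator F) : Prop :=
  ∀ (X Y Z : Type u) (α : X → F.obj X) (β : Y → F.obj Y) (γ : Z → F.obj Z)
    (r : X → Y → Prop) (s : Y → Z → Prop),
    IsSimulation Λ α β r → IsSimulation Λ β γ s → IsSimulation Λ α γ (relComp s r)

def Relator.LaxComp {F : Type u ⥤ Type u} (Λ : Relator F) : Prop :=
  ∀ (X Y Z : Type u) (r : X → Y → Prop) (s : Y → Z → Prop),
    (∃ x z, relComp s r x z) →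
    ∀ (u : F.obj X) (w : F.obj Z),
      relComp (Λ.map s) (Λ.map r) u w → Λ.map (relComp s r) u w

def SimulationsClosedUnderConv {F : Type u ⥤ Type u} (Λ : Relator F) : Prop :=
  ∀ (X Y : Type u) (α : X → F.obj X) (β : Y → F.obj Y) (r : X → Y → Prop),
    IsSimulation Λ α β r → IsSimulation Λ β α (relConv r)

def Relator.CommutesConv {F : Type u ⥤ Type u} (Λ : Relator F) : Prop :=
  ∀ (X Y : Type u) (r : X → Y → Prop), (∃ x y, r x y) →
    ∀ (v : F.obj Y) (u : F.obj X), Λ.map (relConv r) v u ↔ relConv (Λ.map r) v u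

section

variable {F : Type u ⥤ Type u} (Λ : Relator F)

theorem isSimulation_const_iff {X Y : Type u} (u : F.obj X) (v : F.obj Y) (r : X → Y → Prop) :
    IsSimulation Λ (fun _ => u) (fun _ => v) r ↔ ((∃ x y, r x y) → Λ.map r u v) :=
  ⟨fun h ⟨x, y, hxy⟩ => h x y hxy, fun h x y hxy => h ⟨x, y, hxy⟩⟩

theorem isCoalgHom_const {X Y : Type u} (f : X → Y) (u : F.obj X) :
    IsCoalgHom F (fun _ => u) (fun _ => F.map (TypeCat.ofHom f) u) f :=
  fun _ => rfl

theorem simulationsContainHoms_iff : SimulationsContainHoms Λ ↔ Λ.ExtendsFunctor := by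
  constructor
  · rintro h X Y f ⟨x⟩
    refine ⟨fun u v huv => ?_, fun v u huv => ?_⟩ <;> subst huv
    · exact (h X Y _ _ f (isCoalgHom_const f u)).1 x (f x) rfl
    · exact (h X Y _ _ f (isCoalgHom_const f u)).2 (f x) x rfl
  · intro h X Y α β f hf
    refine ⟨fun x y hxy => ?_, fun y x hxy => ?_⟩ <;> subst hxy
    · exact (h X Y f ⟨x⟩).1 (α x) (β (f x)) (hf x).symm
    · exact (h X Y f ⟨x⟩).2 (β (f x)) (α x) (hf x).symm

theorem simulationsClosedUnderComp_iff : SimulationsClosedUnderComp Λ ↔ Λ.LaxComp := by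
  constructor
  · rintro h X Y Z r s hne u w ⟨v, hru, hsv⟩
    have hr := (isSimulation_const_iff Λ u v r).2 fun _ => hru
    have hs := (isSimulation_const_iff Λ v w s).2 fun _ => hsv
    exact (isSimulation_const_iff Λ u w _).1 (h X Y Z _ _ _ r s hr hs) hne
  · rintro h X Y Z α β γ r s hr hs x z ⟨y, hxy, hyz⟩
    exact h X Y Z r s ⟨x, z, y, hxy, hyz⟩ (α x) (γ z) ⟨β y, hr x y hxy, hs y z hyz⟩

theorem simulationsClosedUnderConv_iff : SimulationsClosedUnderConv Λ ↔ Λ.CommutesConv := by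
  constructor
  · rintro h X Y r ⟨x, y, hxy⟩ v u
    constructor
    · intro hc
      have hs := (isSimulation_const_iff Λ v u (relConv r)).2 fun _ => hc
      exact (isSimulation_const_iff Λ u v r).1 (h Y X _ _ _ hs) ⟨x, y, hxy⟩
    · intro hc
      have hs := (isSimulation_const_iff Λ u v r).2 fun _ => hc
      exact (isSimulation_const_iff Λ v u (relConv r)).1 (h X Y _ _ r hs) ⟨y, x, hxy⟩
  · intro h X Y α β r hr y x hxy
    exact (h X Y r ⟨x, y, hxy⟩ (β y) (α x)).2 (hr x y hxy)

end

/-- Characterizations of closure properties of the class of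
`Λ`-simulations:
(1) it contains all coalgebra homomorphisms and their converses iff `Ff ≤ Λf` and
`(Ff)° ≤ Λ(f°)` for every function `f` with non-empty domain;
(2) it is closed under relational composition iff `Λs · Λr ≤ Λ(s · r)` whenever
`s · r` is non-empty;
(3) it is closed under converses iff `Λ(r°) = (Λr)°` for every non-empty `r`. -/
theorem stmt3 (F : Type u ⥤ Type u) (Λ : Relator F) :
    ((∀ (X Y : Type u) (α : X → F.obj X) (β : Y → F.obj Y) (f : X → Y),
        IsCoalgHom F α β f →
          IsSimulation Λ α β (fgraph f) ∧ IsSimulation Λ β α (relConv (fgraph f))) ↔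
      (∀ (X Y : Type u) (f : X → Y), Nonempty X →
        (∀ (u : F.obj X) (v : F.obj Y), F.map (TypeCat.ofHom f) u = v → Λ.map (fgraph f) u v) ∧
        (∀ (v : F.obj Y) (u : F.obj X), F.map (TypeCat.ofHom f) u = v → Λ.map (relConv (fgraph f)) v u)))
    ∧
    ((∀ (X Y Z : Type u) (α : X → F.obj X) (β : Y → F.obj Y) (γ : Z → F.obj Z)
        (r : X → Y → Prop) (s : Y → Z → Prop),
        IsSimulation Λ α β r → IsSimulation Λ β γ s → IsSimulation Λ α γ (relComp s r)) ↔
      (∀ (X Y Z : Type u) (r : X → Y → Prop) (s : Y → Z → Prop),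
        (∃ x z, relComp s r x z) →
        ∀ (u : F.obj X) (w : F.obj Z),
          relComp (Λ.map s) (Λ.map r) u w → Λ.map (relComp s r) u w))
    ∧
    ((∀ (X Y : Type u) (α : X → F.obj X) (β : Y → F.obj Y) (r : X → Y → Prop),
        IsSimulation Λ α β r → IsSimulation Λ β α (relConv r)) ↔
      (∀ (X Y : Type u) (r : X → Y → Prop), (∃ x y, r x y) →
        ∀ (v : F.obj Y) (u : F.obj X), Λ.map (relConv r) v u ↔ relConv (Λ.map r) v u)) := by
  exact ⟨simulationsContainHoms_iff Λ, simulationsClosedUnderComp_iff Λ,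
    simulationsClosedUnderConv_iff Λ⟩
end

section
/- Let F be a set functor and Λ a normal relational connector of F. Then for every relation r : X ⇸ Y: (1) for every span of functions p : R → X, q : R → Y with r = q · p°, one has Fq · (Fp)° ≤ Λr; (2) for all functions f : X → O, g : Y → O such that g° · f is the difunctional closure of r, one has Λr ≤ (Fg)° · Ff. -/
open CategoryTheory Function

universe u

/-- `c` is the difunctional closure of `r`: the least difunctional relation containing `r`. -/
def IsDifunClosure {X Y : Type u} (r c : X → Y → Prop) : Prop :=
  IsDifunctional c ∧ (∀ x y, r x y → c x y) ∧
    ∀ d : X → Y → Prop, IsDifunctional d → (∀ x y, r x y → d x y) → ∀ x y, c x y → d x y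

/-- `Λ` is a relational connector: `1_{FX} ≤ Λ1_X` and `Λ(g° · r · f) = (Fg)° · Λr · Ff`. -/
def IsRelConnector (F : Type u ⥤ Type u) (Λ : Relator F) : Prop :=
  (∀ (X : Type u) (u : F.obj X), Λ.map (@Eq X) u u) ∧
  (∀ {X Y A B : Type u} (r : X → Y → Prop) (f : A → X) (g : B → Y)
    (u : F.obj A) (v : F.obj B),
    Λ.map (fun a b => r (f a) (g b)) u v ↔ Λ.map r (F.map (TypeCat.ofHom f) u) (F.map (TypeCat.ofHom g) v))

/-- `Λ` is normal: `Λ1_X = 1_{FX}` for every set `X`. -/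
def IsNormal (F : Type u ⥤ Type u) (Λ : Relator F) : Prop :=
  ∀ (X : Type u) (u v : F.obj X), Λ.map (@Eq X) u v ↔ u = v

theorem IsRelConnector.map_kernel_iff {F : Type u ⥤ Type u} {Λ : Relator F}
    (hconn : IsRelConnector F Λ) (hnorm : IsNormal F Λ) {X Y O : Type u} (f : X → O)
    (g : Y → O) (u : F.obj X) (v : F.obj Y) :
    Λ.map (fun x y => f x = g y) u v ↔ F.map (TypeCat.ofHom f) u = F.map (TypeCat.ofHom g) v := by
  rw [hconn.2 (@Eq O) f g, hnorm]

theorem IsRelConnector.map_of_span {F : Type u ⥤ Type u} {Λ : Relator F}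
    (hconn : IsRelConnector F Λ) {X Y R : Type u} {r : X → Y → Prop} {p : R → X} {q : R → Y}
    (hspan : ∀ w, r (p w) (q w)) (w : F.obj R) :
    Λ.map r (F.map (TypeCat.ofHom p) w) (F.map (TypeCat.ofHom q) w) := by
  rw [← hconn.2 r p q]
  exact Λ.mono (fun a b hab => hab ▸ hspan a) w w (hconn.1 R w)

theorem IsRelConnector.map_eq_map_of_le_kernel {F : Type u ⥤ Type u} {Λ : Relator F}
    (hconn : IsRelConnector F Λ) (hnorm : IsNormal F Λ) {X Y O : Type u} {r : X → Y → Prop}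
    {f : X → O} {g : Y → O} (hle : ∀ x y, r x y → f x = g y) {u : F.obj X} {v : F.obj Y}
    (h : Λ.map r u v) : F.map (TypeCat.ofHom f) u = F.map (TypeCat.ofHom g) v :=
  (hconn.map_kernel_iff hnorm f g u v).1 (Λ.mono hle u v h)

/-- For a normal relational connector `Λ` of `F` and any relation
`r : X ⇸ Y`: (1) for every span `(p, q)` with `r = q · p°` one has `Fq · (Fp)° ≤ Λr`;
(2) for all `f : X → O`, `g : Y → O` such that `g° · f` is the difunctional closure
of `r`, one has `Λr ≤ (Fg)° · Ff`. -/
theorem stmt4 (F : Type u ⥤ Type u) (Λ : Relator F)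
    (hnorm : IsNormal F Λ) (hconn : IsRelConnector F Λ)
    {X Y : Type u} (r : X → Y → Prop) :
    (∀ (R : Type u) (p : R → X) (q : R → Y),
      (∀ x y, r x y ↔ ∃ w, p w = x ∧ q w = y) →
      ∀ (u : F.obj X) (v : F.obj Y),
        (∃ w : F.obj R, F.map (TypeCat.ofHom p) w = u ∧ F.map (TypeCat.ofHom q) w = v) → Λ.map r u v)
    ∧
    (∀ (O : Type u) (f : X → O) (g : Y → O),
      IsDifunClosure r (fun x y => f x = g y) →
      ∀ (u : F.obj X) (v : F.obj Y), Λ.map r u v → F.map (TypeCat.ofHom f) u = F.map (TypeCat.ofHom g) v) := by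
  refine ⟨fun R p q hr _ _ ⟨w, hu, hv⟩ => ?_, fun O f g hcl _ _ h => ?_⟩
  · subst hu hv
    exact hconn.map_of_span (fun w => (hr _ _).2 ⟨w, rfl, rfl⟩) w
  · exact hconn.map_eq_map_of_le_kernel hnorm hcl.2.1 h
end

section
/- Every set functor F that admits a normal relational connector admits a greatest normal relational connector: a normal relational connector Λ of F such that Λ' r ≤ Λr for every normal relational connector Λ' of F and every relation r. -/
open CategoryTheory Function

universe u

/-- `x` and `y` are `Λ`-similar: related by some `Λ`-simulation. -/
def LSimilar {F : Type u ⥤ Type u} (Λ : Relator F) {X Y : Type u}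
    (α : X → F.obj X) (β : Y → F.obj Y) (x : X) (y : Y) : Prop :=
  ∃ r, IsSimulation Λ α β r ∧ r x y

/-! The conditions defining a normal relational connector are pointwise equivalences and
inclusions, so they pass to the pointwise union of any nonempty family of normal relational
connectors. The union of all of them is therefore the greatest one. -/

namespace Relator

variable {F : Type u ⥤ Type u}

def sSup (S : Set (Relator F)) : Relator F where
  map r u v := ∃ Λ ∈ S, Λ.map r u v
  mono hrs u v := fun ⟨Λ, hΛ, h⟩ => ⟨Λ, hΛ, Λ.mono hrs u v h⟩

theorem map_le_sSup {S : Set (Relator F)} {Λ : Relator F} (hΛ : Λ ∈ S) {X Y : Type u}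
    {r : X → Y → Prop} {u : F.obj X} {v : F.obj Y} (h : Λ.map r u v) :
    (sSup S).map r u v :=
  ⟨Λ, hΛ, h⟩

theorem isNormal_sSup {S : Set (Relator F)} (hS : S.Nonempty)
    (hnormal : ∀ Λ ∈ S, IsNormal F Λ) : IsNormal F (sSup S) := by
  intro X u v
  constructor
  · rintro ⟨Λ, hΛ, h⟩
    exact (hnormal Λ hΛ X u v).1 h
  · rintro rfl
    obtain ⟨Λ, hΛ⟩ := hS
    exact map_le_sSup hΛ ((hnormal Λ hΛ X u u).2 rfl)

theorem isRelConnector_sSup {S : Set (Relator F)} (hS : S.Nonempty)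
    (hconn : ∀ Λ ∈ S, IsRelConnector F Λ) : IsRelConnector F (sSup S) := by
  refine ⟨fun X u => ?_, fun r f g u v => ?_⟩
  · obtain ⟨Λ, hΛ⟩ := hS
    exact map_le_sSup hΛ ((hconn Λ hΛ).1 X u)
  · exact exists_congr fun Λ => and_congr_right fun hΛ => (hconn Λ hΛ).2 r f g u v

end Relator

/-- Every set functor that admits a normal relational connector
admits a greatest normal relational connector. -/
theorem stmt7 (F : Type u ⥤ Type u)
    (h : ∃ Λ : Relator F, IsNormal F Λ ∧ IsRelConnector F Λ) :
    ∃ Λ : Relator F, IsNormal F Λ ∧ IsRelConnector F Λ ∧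
      ∀ Λ' : Relator F, IsNormal F Λ' → IsRelConnector F Λ' →
        ∀ {X Y : Type u} (r : X → Y → Prop) (u : F.obj X) (v : F.obj Y),
          Λ'.map r u v → Λ.map r u v := by
  let S : Set (Relator F) := {Λ | IsNormal F Λ ∧ IsRelConnector F Λ}
  refine ⟨Relator.sSup S, Relator.isNormal_sSup h fun Λ hΛ => hΛ.1,
    Relator.isRelConnector_sSup h fun Λ hΛ => hΛ.2, ?_⟩
  intro Λ' hnormal hconn X Y r u v hmap
  exact Relator.map_le_sSup (S := S) ⟨hnormal, hconn⟩ hmap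
end

section
/- Let F be a set functor and Λ a relax extension of F that preserves composition with subidentities. Suppose that Λr_n · … · Λr_1 ≤ 1_{FX} for every set X and every composable sequence of relations r_1, …, r_n such that r_n · … · r_1 ≤ 1_X and img(r_{i-1}) = dom(r_i) for i = 2, …, n. Then the laxification Λ̂ of Λ satisfies Λ̂1_X = 1_{FX} for every set X. -/
open CategoryTheory Function

universe u

/-- `Λ` is a relax extension of `F`: `Ff ≤ Λf` and `(Ff)° ≤ Λ(f°)` for all functions `f`. -/
def IsRelaxExtension (F : Type u ⥤ Type u) (Λ : Relator F) : Prop :=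
  ∀ {X Y : Type u} (f : X → Y),
    (∀ (u : F.obj X) (v : F.obj Y), F.map (TypeCat.ofHom f) u = v → Λ.map (fgraph f) u v) ∧
    (∀ (v : F.obj Y) (u : F.obj X), F.map (TypeCat.ofHom f) u = v → Λ.map (relConv (fgraph f)) v u)

/-- A subidentity is a relation contained in the identity relation. -/
def IsSubId {X : Type u} (s : X → X → Prop) : Prop := ∀ x x', s x x' → x = x'

/-- `Λ` preserves composition with subidentities:
`Λ(r · s) = Λr · Λs` and `Λ(s' · r) = Λs' · Λr` for subidentities `s`, `s'`. -/
def PreservesSubIdComp (F : Type u ⥤ Type u) (Λ : Relator F) : Prop :=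
  ∀ {X Y : Type u} (r : X → Y → Prop),
    (∀ s : X → X → Prop, IsSubId s →
      ∀ (u : F.obj X) (v : F.obj Y),
        Λ.map (relComp r s) u v ↔ relComp (Λ.map r) (Λ.map s) u v) ∧
    (∀ s' : Y → Y → Prop, IsSubId s' →
      ∀ (u : F.obj X) (v : F.obj Y),
        Λ.map (relComp s' r) u v ↔ relComp (Λ.map s') (Λ.map r) u v)

/-- `Chain F Λ c C` holds iff there is a composable sequence of relations
`r_1, …, r_n` (`n ≥ 1`) with relational composite `c = r_n · … · r_1` and
`C = Λr_n · … · Λr_1`. -/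
inductive Chain (F : Type u ⥤ Type u) (Λ : Relator F) :
    ∀ {X Y : Type u}, (X → Y → Prop) → (F.obj X → F.obj Y → Prop) → Prop
  | single {X Y : Type u} (r : X → Y → Prop) : Chain F Λ r (Λ.map r)
  | cons {X Y Z : Type u} {c : X → Y → Prop} {C : F.obj X → F.obj Y → Prop}
      (h : Chain F Λ c C) (s : Y → Z → Prop) :
      Chain F Λ (relComp s c) (relComp (Λ.map s) C)

/-- The laxification of `Λ`:
`Λ̂r = ⋁ { Λr_n · … · Λr_1 | r_1, …, r_n composable with r_n · … · r_1 ≤ r }`. -/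
def laxif (F : Type u ⥤ Type u) (Λ : Relator F) {X Y : Type u} (r : X → Y → Prop) :
    F.obj X → F.obj Y → Prop :=
  fun u v => ∃ (c : X → Y → Prop) (C : F.obj X → F.obj Y → Prop),
    Chain F Λ c C ∧ (∀ x y, c x y → r x y) ∧ C u v

/-- `AlignedChain F Λ c C img` holds iff there is a composable sequence of relations
`r_1, …, r_n` with `img(r_{i-1}) = dom(r_i)` for `i = 2, …, n`, composite
`c = r_n · … · r_1`, `C = Λr_n · … · Λr_1`, and `img = img(r_n)`. -/
inductive AlignedChain (F : Type u ⥤ Type u) (Λ : Relator F) :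
    ∀ {X Y : Type u}, (X → Y → Prop) → (F.obj X → F.obj Y → Prop) → (Y → Prop) → Prop
  | single {X Y : Type u} (r : X → Y → Prop) :
      AlignedChain F Λ r (Λ.map r) (fun y => ∃ x, r x y)
  | cons {X Y Z : Type u} {c : X → Y → Prop} {C : F.obj X → F.obj Y → Prop}
      {img : Y → Prop} (h : AlignedChain F Λ c C img) (s : Y → Z → Prop)
      (hdom : ∀ y, img y ↔ ∃ z, s y z) :
      AlignedChain F Λ (relComp s c) (relComp (Λ.map s) C) (fun z => ∃ y, s y z)

/-!
Suppose `Λr_n ⋯ Λr_1` relates `u` to `v` while `r_n ⋯ r_1 ≤ 1`. Cut every `r_i` down to the pairs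
lying on a complete path `x_0 r_1 x_1 ⋯ r_n x_n`: the cut-down sequence is aligned and its composite
is still below `1`. Since `Λr = Λ(img r) · Λr = Λr · Λ(dom r)` when `Λ` preserves composition with
subidentities, the cut-down `Λ`-composite still relates `u` to `v` (up to a final subidentity), so the
hypothesis forces `u = v`.
-/

def subId {Y : Type u} (P : Y → Prop) : Y → Y → Prop := fun y y' => y = y' ∧ P y

def relDom {X Y : Type u} (r : X → Y → Prop) : X → Prop := fun x => ∃ y, r x y

def relImg {X Y : Type u} (r : X → Y → Prop) : Y → Prop := fun y => ∃ x, r x y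

theorem isSubId_subId {Y : Type u} (P : Y → Prop) : IsSubId (subId P) := fun _ _ h => h.1

section

variable {F : Type u ⥤ Type u} {Λ : Relator F}

theorem IsRelaxExtension.map_eq_self (hrelax : IsRelaxExtension F Λ) {X : Type u} (u : F.obj X) :
    Λ.map (@Eq X) u u :=
  (hrelax (id : X → X)).1 u u (by rw [show TypeCat.ofHom (id : X → X) = 𝟙 X from rfl, F.map_id]; rfl)

theorem PreservesSubIdComp.exists_map_subId_relImg (hsub : PreservesSubIdComp F Λ)
    {X Y : Type u} {r : X → Y → Prop} {u : F.obj X} {v : F.obj Y} (h : Λ.map r u v) :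
    ∃ w, Λ.map r u w ∧ Λ.map (subId (relImg r)) w v :=
  ((hsub r).2 _ (isSubId_subId _) u v).mp <|
    Λ.mono (fun x y hxy => ⟨y, hxy, rfl, x, hxy⟩) u v h

theorem PreservesSubIdComp.exists_map_subId_relDom (hsub : PreservesSubIdComp F Λ)
    {X Y : Type u} {r : X → Y → Prop} {u : F.obj X} {v : F.obj Y} (h : Λ.map r u v) :
    ∃ w, Λ.map (subId (relDom r)) u w ∧ Λ.map r w v :=
  ((hsub r).1 _ (isSubId_subId _) u v).mp <|
    Λ.mono (fun x y hxy => ⟨x, ⟨rfl, y, hxy⟩, hxy⟩) u v h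

/-- `P` is the backward restriction, propagated from the end of the chain; the image `G` of the
aligned chain is the forward restriction, carried along as the trailing factor `Λ(subId G)`. -/
theorem Chain.exists_alignedChain (hsub : PreservesSubIdComp F Λ) {X Y : Type u}
    {c : X → Y → Prop} {C : F.obj X → F.obj Y → Prop} (hch : Chain F Λ c C) :
    ∀ {P : Y → Prop} {u : F.obj X} {w a : F.obj Y}, C u w → Λ.map (subId P) w a →
      ∃ (c' : X → Y → Prop) (C' : F.obj X → F.obj Y → Prop) (G : Y → Prop),
        AlignedChain F Λ c' C' G ∧ (∀ x y, c' x y → c x y) ∧ (∀ y, G y → P y) ∧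
          ∃ e, C' u e ∧ Λ.map (subId G) e a := by
  induction hch with
  | single r =>
    intro P u w a hC hP
    have hq : Λ.map (relComp (subId P) r) u a :=
      ((hsub r).2 _ (isSubId_subId P) u a).mpr ⟨w, hC, hP⟩
    obtain ⟨e, hqe, hea⟩ := hsub.exists_map_subId_relImg hq
    refine ⟨_, _, _, AlignedChain.single _, ?_, ?_, e, hqe, hea⟩
    · rintro x y ⟨_, hr, rfl, -⟩
      exact hr
    · rintro y ⟨x, _, -, rfl, hPy⟩
      exact hPy
  | cons _ s ih =>
    intro P' u v a hC hP'
    obtain ⟨w, hCw, hsw⟩ := hC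
    have hs : Λ.map (relComp (subId P') s) w a :=
      ((hsub s).2 _ (isSubId_subId P') w a).mpr ⟨v, hsw, hP'⟩
    obtain ⟨a', hPa', hsa'⟩ := hsub.exists_map_subId_relDom hs
    obtain ⟨c', C', G, hal, hc', hGP, e, hC'e, hGe⟩ := ih hCw hPa'
    set q := relComp (relComp (subId P') s) (subId G)
    have hq : Λ.map q e a := ((hsub _).1 _ (isSubId_subId G) e a).mpr ⟨a', hGe, hsa'⟩
    obtain ⟨e', hqe', he'a⟩ := hsub.exists_map_subId_relImg hq
    have hdom : ∀ y, G y ↔ ∃ z, q y z := by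
      refine fun y => ⟨fun hGy => ?_, fun ⟨_, _, ⟨rfl, hGy⟩, _⟩ => hGy⟩
      obtain ⟨z, hsz⟩ := hGP y hGy
      exact ⟨z, y, ⟨rfl, hGy⟩, hsz⟩
    refine ⟨_, _, _, AlignedChain.cons hal q hdom, ?_, ?_, e', ⟨e, hC'e, hqe'⟩, he'a⟩
    · rintro x z ⟨y, hxy, _, ⟨rfl, -⟩, _, hs, rfl, -⟩
      exact ⟨y, hc' x y hxy, hs⟩
    · rintro z ⟨y, _, -, _, -, rfl, hP'z⟩
      exact hP'z

end

/-- Let `Λ` be a relax extension of `F` preserving composition with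
subidentities, and suppose that `Λr_n · … · Λr_1 ≤ 1_{FX}` for every composable
sequence `r_1, …, r_n` with `r_n · … · r_1 ≤ 1_X` and `img(r_{i-1}) = dom(r_i)`.
Then the laxification `Λ̂` of `Λ` satisfies `Λ̂1_X = 1_{FX}` for every set `X`. -/
theorem stmt8 (F : Type u ⥤ Type u) (Λ : Relator F)
    (hrelax : IsRelaxExtension F Λ) (hsub : PreservesSubIdComp F Λ)
    (H : ∀ (X : Type u) (c : X → X → Prop) (C : F.obj X → F.obj X → Prop)
      (img : X → Prop), AlignedChain F Λ c C img → (∀ x x', c x x' → x = x') →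
        ∀ u v, C u v → u = v) :
    ∀ (X : Type u) (u v : F.obj X), laxif F Λ (@Eq X) u v ↔ u = v := by
  intro X u v
  refine ⟨fun ⟨c, C, hch, hc, hC⟩ => ?_, fun huv => huv ▸ ⟨_, _, Chain.single _, fun _ _ h => h,
    hrelax.map_eq_self u⟩⟩
  have hv : Λ.map (subId fun _ : X => True) v v :=
    Λ.mono (fun _ _ h => ⟨h, trivial⟩) v v (hrelax.map_eq_self v)
  obtain ⟨c', C', G, hal, hc', -, e, hC'e, hGe⟩ := hch.exists_alignedChain hsub hC hv
  have hdom : ∀ y, G y ↔ ∃ z, subId G y z := fun y => ⟨fun h => ⟨y, rfl, h⟩, fun ⟨_, _, h⟩ => h⟩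
  refine H X _ _ _ (hal.cons (subId G) hdom) ?_ u v ⟨e, hC'e, hGe⟩
  rintro x y ⟨m, hxm, rfl, -⟩
  exact hc x m (hc' x m hxm)
end

section
/- Let F be a set functor and (Λ_i)_{i ∈ I} a non-empty family of normal lax extensions of F. The relax extension Λ given by the pointwise supremum Λr = ⋁_{i ∈ I} Λ_i r preserves composition with subidentities if and only if every Λ_i preserves composition with subidentities. -/
open CategoryTheory Function

universe u

/-- `x` and `y` are `Λ`-similar: related by some `Λ`-simulation. -/
def Similar' {F : Type u ⥤ Type u} (Λ : Relator F) {X Y : Type u}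
    (α : X → F.obj X) (β : Y → F.obj Y) (x : X) (y : Y) : Prop :=
  ∃ r, IsSimulation Λ α β r ∧ r x y

/-- `Λ` is a lax extension of `F`: a relax extension with `Λs · Λr ≤ Λ(s · r)`. -/
def IsLaxExtension (F : Type u ⥤ Type u) (Λ : Relator F) : Prop :=
  IsRelaxExtension F Λ ∧
    ∀ {X Y Z : Type u} (r : X → Y → Prop) (s : Y → Z → Prop)
      (u : F.obj X) (w : F.obj Z),
      relComp (Λ.map s) (Λ.map r) u w → Λ.map (relComp s r) u w

/-- The pointwise supremum of a family of relators. -/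
def supRelator {F : Type u ⥤ Type u} {I : Type u} (Λi : I → Relator F) : Relator F where
  map r u v := ∃ i, (Λi i).map r u v
  mono h u v := fun ⟨i, hi⟩ => ⟨i, (Λi i).mono h u v hi⟩

/-! A subidentity `s` is a subset `A = {x | s x x}`. Every lax extension has `Λ s u u` for `u` in
(the stand-in for) `F A`, and a normal extension that is exact on graphs and preserves composition
with subidentities has the converse, because `inl · s = inlOn s · s`. For such extensions,
preserving composition with subidentities therefore only says that `Λ(r · s)` relates elements
supported in `A` and `Λ(s' · r)` relates into elements supported in `A'`: a condition on each
relator separately, which the supremum satisfies iff every member does. -/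

variable {F : Type u ⥤ Type u}

open Classical in
noncomputable def inlOn {X : Type u} (s : X → X → Prop) : X → X ⊕ {x : X // ¬ s x x} :=
  fun x => if h : s x x then Sum.inl x else Sum.inr ⟨x, h⟩

lemma inl_eq_inlOn_iff {X : Type u} (s : X → X → Prop) (x x' : X) :
    (Sum.inl x : X ⊕ {x : X // ¬ s x x}) = inlOn s x' ↔ x = x' ∧ s x' x' := by
  unfold inlOn
  by_cases h : s x' x' <;> simp [h]

/-- `{x | s x x}` is the equalizer of `Sum.inl` and `inlOn s`; being equalized by their images
under `F` stands in for `u ∈ F {x | s x x}`. -/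
def IsSupportedBy (F : Type u ⥤ Type u) {X : Type u} (s : X → X → Prop) (u : F.obj X) : Prop :=
  F.map (TypeCat.ofHom Sum.inl) u = F.map (TypeCat.ofHom (inlOn s)) u

def PreservesGraphs (F : Type u ⥤ Type u) (Λ : Relator F) : Prop :=
  ∀ {X Y : Type u} (f : X → Y) (u : F.obj X) (v : F.obj Y),
    Λ.map (fgraph f) u v ↔ F.map (TypeCat.ofHom f) u = v

def MapCompSubIdSupported (F : Type u ⥤ Type u) (Λ : Relator F) : Prop :=
  ∀ {X Y : Type u} (r : X → Y → Prop) (u : F.obj X) (v : F.obj Y),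
    (∀ s, IsSubId s → Λ.map (relComp r s) u v → IsSupportedBy F s u) ∧
    (∀ s', IsSubId s' → Λ.map (relComp s' r) u v → IsSupportedBy F s' v)

def MapCompOfSupported (F : Type u ⥤ Type u) (Λ : Relator F) : Prop :=
  ∀ {X Y : Type u} (r : X → Y → Prop) (u : F.obj X) (v : F.obj Y), Λ.map r u v →
    (∀ s, IsSupportedBy F s u → Λ.map (relComp r s) u v) ∧
    (∀ s', IsSupportedBy F s' v → Λ.map (relComp s' r) u v)

lemma IsNormal.eq_of_map_of_isSubId {Λ : Relator F} (hΛ : IsNormal F Λ) {X : Type u}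
    {s : X → X → Prop} (hs : IsSubId s) {u v : F.obj X} (h : Λ.map s u v) : u = v :=
  (hΛ X u v).1 (Λ.mono hs u v h)

lemma IsLaxExtension.preservesGraphs {Λ : Relator F} (hlax : IsLaxExtension F Λ)
    (hnorm : IsNormal F Λ) : PreservesGraphs F Λ := by
  intro X Y f u v
  refine ⟨fun h => ?_, (hlax.1 f).1 u v⟩
  have hconv : Λ.map (relConv (fgraph f)) (F.map (TypeCat.ofHom f) u) u := (hlax.1 f).2 _ u rfl
  have hcomp := hlax.2 _ _ _ _ ⟨u, hconv, h⟩
  refine (hnorm Y _ v).1 (Λ.mono ?_ _ _ hcomp)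
  rintro y y' ⟨x, rfl, rfl⟩
  rfl

lemma IsLaxExtension.map_self_of_isSupportedBy {Λ : Relator F} (hlax : IsLaxExtension F Λ)
    {X : Type u} {s : X → X → Prop} {u : F.obj X} (hu : IsSupportedBy F s u) : Λ.map s u u := by
  have hinl := (hlax.1 (Sum.inl : X → X ⊕ {x : X // ¬ s x x})).1 u _ rfl
  have hinlOn := (hlax.1 (inlOn s)).2 _ u hu.symm
  refine Λ.mono ?_ _ _ (hlax.2 _ _ _ _ ⟨_, hinl, hinlOn⟩)
  rintro x x' ⟨y, hx, hx'⟩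
  obtain ⟨rfl, hsx⟩ := (inl_eq_inlOn_iff s x x').1 (hx.trans hx'.symm)
  exact hsx

lemma IsLaxExtension.mapCompOfSupported {Λ : Relator F} (hlax : IsLaxExtension F Λ) :
    MapCompOfSupported F Λ := fun {_ _} _ u v h =>
  ⟨fun _ hs => hlax.2 _ _ _ _ ⟨u, hlax.map_self_of_isSupportedBy hs, h⟩,
    fun _ hs' => hlax.2 _ _ _ _ ⟨v, h, hlax.map_self_of_isSupportedBy hs'⟩⟩

lemma isSupportedBy_of_map_self {Λ : Relator F} (hnorm : IsNormal F Λ)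
    (hgr : PreservesGraphs F Λ) (hpres : PreservesSubIdComp F Λ) {X : Type u}
    {s : X → X → Prop} (hs : IsSubId s) {u : F.obj X} (hu : Λ.map s u u) :
    IsSupportedBy F s u := by
  have hinl : Λ.map (relComp (fgraph (Sum.inl : X → X ⊕ {x : X // ¬ s x x})) s) u
      (F.map (TypeCat.ofHom Sum.inl) u) :=
    ((hpres _).1 s hs u _).2 ⟨u, hu, (hgr _ u _).2 rfl⟩
  -- `inl` and `inlOn s` agree on `{x | s x x}`
  have hinlOn : Λ.map (relComp (fgraph (inlOn s)) s) u (F.map (TypeCat.ofHom Sum.inl) u) := by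
    refine Λ.mono ?_ _ _ hinl
    rintro x y ⟨w, hxw, rfl⟩
    obtain rfl := hs x w hxw
    exact ⟨x, hxw, ((inl_eq_inlOn_iff s x x).2 ⟨rfl, hxw⟩).symm⟩
  obtain ⟨w, hsw, hw⟩ := ((hpres _).1 s hs u _).1 hinlOn
  obtain rfl := hnorm.eq_of_map_of_isSubId hs hsw
  exact ((hgr _ u _).1 hw).symm

theorem preservesSubIdComp_iff_mapCompSubIdSupported {Λ : Relator F} (hnorm : IsNormal F Λ)
    (hgr : PreservesGraphs F Λ) (hcomp : MapCompOfSupported F Λ) :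
    PreservesSubIdComp F Λ ↔ MapCompSubIdSupported F Λ := by
  have hrefl : ∀ {X : Type u} (x : F.obj X), Λ.map (@Eq X) x x := fun x => (hnorm _ x x).2 rfl
  constructor
  · intro hpres X Y r u v
    refine ⟨fun s hs h => ?_, fun s' hs' h => ?_⟩
    · obtain ⟨w, hsw, -⟩ := ((hpres r).1 s hs u v).1 h
      obtain rfl := hnorm.eq_of_map_of_isSubId hs hsw
      exact isSupportedBy_of_map_self hnorm hgr hpres hs hsw
    · obtain ⟨w, -, hsw⟩ := ((hpres r).2 s' hs' u v).1 h
      obtain rfl := hnorm.eq_of_map_of_isSubId hs' hsw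
      exact isSupportedBy_of_map_self hnorm hgr hpres hs' hsw
  · intro hsupp X Y r
    refine ⟨fun s hs u v => ⟨fun h => ?_, ?_⟩, fun s' hs' u v => ⟨fun h => ?_, ?_⟩⟩
    · have hu := (hsupp r u v).1 s hs h
      refine ⟨u, ?_, Λ.mono ?_ u v h⟩
      · exact Λ.mono (fun x y ⟨z, hxz, hzy⟩ => hzy ▸ hxz) u u ((hcomp _ u u (hrefl u)).1 s hu)
      · rintro x y ⟨z, hxz, hzy⟩
        exact hs x z hxz ▸ hzy
    · rintro ⟨w, hsw, hr⟩
      obtain rfl := hnorm.eq_of_map_of_isSubId hs hsw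
      have hu := (hsupp _ u u).1 s hs (Λ.mono (fun x y hxy => ⟨y, hxy, rfl⟩) u u hsw)
      exact (hcomp r u v hr).1 s hu
    · have hv := (hsupp r u v).2 s' hs' h
      refine ⟨v, Λ.mono ?_ u v h, ?_⟩
      · rintro x y ⟨z, hxz, hzy⟩
        exact (hs' z y hzy).symm ▸ hxz
      · exact Λ.mono (fun x y ⟨z, hxz, hzy⟩ => hxz ▸ hzy) v v ((hcomp _ v v (hrefl v)).2 s' hv)
    · rintro ⟨w, hr, hsw⟩
      obtain rfl := (hnorm.eq_of_map_of_isSubId hs' hsw).symm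
      have hv := (hsupp _ v v).2 s' hs' (Λ.mono (fun x y hxy => ⟨x, rfl, hxy⟩) v v hsw)
      exact (hcomp r u v hr).2 s' hv

section supRelator

variable {I : Type u} (Λi : I → Relator F)

lemma supRelator_isNormal [Nonempty I] (h : ∀ i, IsNormal F (Λi i)) :
    IsNormal F (supRelator Λi) := fun X u v =>
  ⟨fun ⟨i, hi⟩ => (h i X u v).1 hi, fun huv => ⟨Classical.arbitrary I, (h _ X u v).2 huv⟩⟩

lemma supRelator_preservesGraphs [Nonempty I] (h : ∀ i, PreservesGraphs F (Λi i)) :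
    PreservesGraphs F (supRelator Λi) := fun {_ _} f u v =>
  ⟨fun ⟨i, hi⟩ => (h i f u v).1 hi, fun huv => ⟨Classical.arbitrary I, (h _ f u v).2 huv⟩⟩

lemma supRelator_mapCompOfSupported (h : ∀ i, MapCompOfSupported F (Λi i)) :
    MapCompOfSupported F (supRelator Λi) := fun {_ _} r u v ⟨i, hi⟩ =>
  ⟨fun s hs => ⟨i, (h i r u v hi).1 s hs⟩, fun s' hs' => ⟨i, (h i r u v hi).2 s' hs'⟩⟩

lemma supRelator_mapCompSubIdSupported_iff :
    MapCompSubIdSupported F (supRelator Λi) ↔ ∀ i, MapCompSubIdSupported F (Λi i) :=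
  ⟨fun h i {_ _} r u v => ⟨fun s hs hi => (h r u v).1 s hs ⟨i, hi⟩,
      fun s' hs' hi => (h r u v).2 s' hs' ⟨i, hi⟩⟩,
    fun h {_ _} r u v => ⟨fun s hs ⟨i, hi⟩ => (h i r u v).1 s hs hi,
      fun s' hs' ⟨i, hi⟩ => (h i r u v).2 s' hs' hi⟩⟩

end supRelator

/-- The pointwise supremum of a non-empty family of normal lax
extensions of `F` preserves composition with subidentities iff each member of the
family preserves composition with subidentities. -/
theorem stmt9 (F : Type u ⥤ Type u) {I : Type u} (hne : Nonempty I)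
    (Λi : I → Relator F)
    (h : ∀ i, IsLaxExtension F (Λi i) ∧ IsNormal F (Λi i)) :
    PreservesSubIdComp F (supRelator Λi) ↔ ∀ i, PreservesSubIdComp F (Λi i) := by
  have hgr : ∀ i, PreservesGraphs F (Λi i) := fun i => (h i).1.preservesGraphs (h i).2
  have hcomp : ∀ i, MapCompOfSupported F (Λi i) := fun i => (h i).1.mapCompOfSupported
  calc PreservesSubIdComp F (supRelator Λi)
      ↔ MapCompSubIdSupported F (supRelator Λi) :=
        preservesSubIdComp_iff_mapCompSubIdSupported (supRelator_isNormal Λi fun i => (h i).2)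
          (supRelator_preservesGraphs Λi hgr) (supRelator_mapCompOfSupported Λi hcomp)
    _ ↔ ∀ i, MapCompSubIdSupported F (Λi i) := supRelator_mapCompSubIdSupported_iff Λi
    _ ↔ ∀ i, PreservesSubIdComp F (Λi i) :=
        forall_congr' fun i =>
          (preservesSubIdComp_iff_mapCompSubIdSupported (h i).2 (hgr i) (hcomp i)).symm
end

section
/- Let F be a set functor and Λ a lax extension of F. Then: (1) for every relation r : X ⇸ Y with domain inclusion d_r : dom(r) ↪ X, the image of F d_r is contained in the domain of Λr; (2) if Λ is normal, then Λ(r°) = (Λr)° for every difunctional relation r : X ⇸ Y; (3) if Λ is normal and F preserves empty intersections, then Λ(j · i°) = Fj · (Fi)° for all injective functions i : A → X and j : A → Y. -/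
open CategoryTheory Function

universe u

/-- `x` and `y` are `Λ`-similar: related by some `Λ`-simulation. -/
def LaxSimilar {F : Type u ⥤ Type u} (Λ : Relator F) {X Y : Type u}
    (α : X → F.obj X) (β : Y → F.obj Y) (x : X) (y : Y) : Prop :=
  ∃ r, IsSimulation Λ α β r ∧ r x y

/-- The commutative square `f ∘ p = g ∘ q` is a pullback square (in `Set`). -/
def IsPullbackSq {P X B A : Type u} (p : P → X) (q : P → B) (f : X → A) (g : B → A) : Prop :=
  (∀ w, f (p w) = g (q w)) ∧ ∀ x b, f x = g b → ∃! w, p w = x ∧ q w = b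

/-- `F` preserves empty intersections: it preserves the pullback of any two
injections with disjoint images. -/
def PreservesEmptyIntersections (F : Type u ⥤ Type u) : Prop :=
  ∀ {P A B X : Type u} (p : P → A) (q : P → B) (i : A → X) (j : B → X),
    Function.Injective i → Function.Injective j → (∀ a b, i a ≠ j b) →
    IsPullbackSq p q i j → IsPullbackSq (F.map (TypeCat.ofHom p)) (F.map (TypeCat.ofHom q)) (F.map (TypeCat.ofHom i)) (F.map (TypeCat.ofHom j))

/-!
Laxness alone gives `Fg · (Ff)° ≤ Λ(g · f°)` for every span, which yields (1); with normality
also `Λ(g° · f) = (Fg)° · Ff`, which yields (2). For (3), the span `X ← A → Y` of injections is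
the pullback of two injections `X → X ⊕ Y ← Y`, so (3) says that `F` preserves this pullback.
For `A = ∅` that is the hypothesis; otherwise a point of `A` yields retractions `ρ_X`, `ρ_Y`,
and the composite of the idempotents `f ρ_X` and `g ρ_Y` factors through `A` and fixes every
element of `FX ∩ FY` (Trnková).
-/

open TypeCat

section Functor

variable (F : Type u ⥤ Type u)

lemma map_ofHom_comp_apply {X Y Z : Type u} (f : X → Y) (g : Y → Z) (x : F.obj X) :
    F.map (ofHom (g ∘ f)) x = F.map (ofHom g) (F.map (ofHom f) x) :=
  F.map_comp_apply (ofHom f) (ofHom g) x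

lemma map_ofHom_injective_of_leftInverse {X Y : Type u} {f : X → Y} {ρ : Y → X}
    (hρ : LeftInverse ρ f) : Injective (F.map (ofHom f)) := by
  intro a b hab
  have hid : ∀ x : F.obj X, F.map (ofHom ρ) (F.map (ofHom f) x) = x := fun x => by
    rw [← map_ofHom_comp_apply, hρ.comp_eq_id]
    exact F.map_id_apply X x
  rw [← hid a, hab, hid b]

end Functor

section Pullback

variable {P X Y Z : Type u} {i : P → X} {j : P → Y} {f : X → Z} {g : Y → Z}

lemma IsPullbackSq.exists_iff (hsq : IsPullbackSq i j f g) (x : X) (y : Y) :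
    (∃ a, i a = x ∧ j a = y) ↔ f x = g y := by
  constructor
  · rintro ⟨a, rfl, rfl⟩
    exact hsq.1 a
  · exact fun h => (hsq.2 x y h).exists

/-- Together with `inl`, this exhibits a span `X ← P → Y` of injections as a pullback of
injections. -/
noncomputable def spanCospanRight (i : P → X) (j : P → Y) : Y → X ⊕ Y :=
  extend j (Sum.inl ∘ i) Sum.inr

lemma spanCospanRight_apply (hj : Injective j) (a : P) :
    spanCospanRight i j (j a) = Sum.inl (i a) :=
  hj.extend_apply _ _ a

lemma spanCospanRight_of_notMem_range {y : Y} (hy : ¬∃ a, j a = y) :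
    spanCospanRight i j y = Sum.inr y :=
  extend_apply' _ _ y hy

lemma injective_spanCospanRight (hi : Injective i) (hj : Injective j) :
    Injective (spanCospanRight i j) := by
  intro y₁ y₂ h
  by_cases h₁ : ∃ a, j a = y₁ <;> by_cases h₂ : ∃ a, j a = y₂
  · obtain ⟨a₁, rfl⟩ := h₁
    obtain ⟨a₂, rfl⟩ := h₂
    rw [spanCospanRight_apply hj, spanCospanRight_apply hj] at h
    rw [hi (Sum.inl_injective h)]
  · obtain ⟨a₁, rfl⟩ := h₁
    rw [spanCospanRight_apply hj, spanCospanRight_of_notMem_range h₂] at h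
    exact absurd h Sum.inl_ne_inr
  · obtain ⟨a₂, rfl⟩ := h₂
    rw [spanCospanRight_apply hj, spanCospanRight_of_notMem_range h₁] at h
    exact absurd h Sum.inr_ne_inl
  · rw [spanCospanRight_of_notMem_range h₁, spanCospanRight_of_notMem_range h₂] at h
    exact Sum.inr_injective h

lemma isPullbackSq_inl_spanCospanRight (hj : Injective j) :
    IsPullbackSq i j Sum.inl (spanCospanRight i j) := by
  refine ⟨fun a => (spanCospanRight_apply hj a).symm, fun x y h => ?_⟩
  by_cases hy : ∃ a, j a = y
  · obtain ⟨a, rfl⟩ := hy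
    rw [spanCospanRight_apply hj] at h
    exact ⟨a, ⟨(Sum.inl_injective h).symm, rfl⟩, fun b hb => hj hb.2⟩
  · rw [spanCospanRight_of_notMem_range hy] at h
    exact absurd h Sum.inl_ne_inr

/-- Trnková: every set functor preserves pullbacks of injections with nonempty intersection. -/
lemma exists_map_eq_of_isPullbackSq_of_nonempty (F : Type u ⥤ Type u) [Nonempty P]
    (hf : Injective f) (hg : Injective g) (hsq : IsPullbackSq i j f g)
    {u : F.obj X} {v : F.obj Y} (huv : F.map (ofHom f) u = F.map (ofHom g) v) :
    ∃ w, F.map (ofHom i) w = u ∧ F.map (ofHom j) w = v := by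
  obtain ⟨a₀⟩ := ‹Nonempty P›
  set ρX : Z → X := extend f id fun _ => i a₀
  set ρY : Z → Y := extend g id fun _ => j a₀
  have hρX : LeftInverse ρX f := hf.extend_apply id _
  have hρY : LeftInverse ρY g := hg.extend_apply id _
  have hrange : Set.range (g ∘ ρY ∘ f ∘ ρX) ⊆ Set.range (f ∘ i) := by
    rintro _ ⟨z, rfl⟩
    by_cases hx : ∃ y, g y = f (ρX z)
    · obtain ⟨y, hy⟩ := hx
      obtain ⟨a, hai, -⟩ := (hsq.exists_iff _ y).2 hy.symm
      refine ⟨a, ?_⟩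
      change f (i a) = g (ρY (f (ρX z)))
      rw [← hy, hρY y, hy, hai]
    · refine ⟨a₀, ?_⟩
      change f (i a₀) = g (ρY (f (ρX z)))
      rw [show ρY (f (ρX z)) = j a₀ from extend_apply' _ _ _ hx]
      exact hsq.1 a₀
  obtain ⟨σ, hσ⟩ := Set.range_subset_range_iff_exists_comp.1 hrange
  set z := F.map (ofHom f) u
  have hfixX : F.map (ofHom (f ∘ ρX)) z = z := by
    rw [map_ofHom_comp_apply F ρX f, ← map_ofHom_comp_apply F f ρX, hρX.comp_eq_id]
    exact congrArg _ (F.map_id_apply X u)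
  have hfixY : F.map (ofHom (g ∘ ρY)) z = z := by
    rw [huv, map_ofHom_comp_apply F ρY g, ← map_ofHom_comp_apply F g ρY, hρY.comp_eq_id]
    exact congrArg _ (F.map_id_apply Y v)
  have hzσ : F.map (ofHom (f ∘ i)) (F.map (ofHom σ) z) = z := by
    rw [← map_ofHom_comp_apply, ← hσ, ← comp_assoc,
      map_ofHom_comp_apply F (f ∘ ρX) (g ∘ ρY), hfixX, hfixY]
  refine ⟨F.map (ofHom σ) z, map_ofHom_injective_of_leftInverse F hρX ?_,
    map_ofHom_injective_of_leftInverse F hρY ?_⟩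
  · rw [← map_ofHom_comp_apply, hzσ]
  · have hcomm : g ∘ j = f ∘ i := funext fun a => (hsq.1 a).symm
    rw [← map_ofHom_comp_apply, hcomm, hzσ, huv]

lemma exists_map_eq_of_isPullbackSq {F : Type u ⥤ Type u} (hF : PreservesEmptyIntersections F)
    (hf : Injective f) (hg : Injective g) (hsq : IsPullbackSq i j f g)
    {u : F.obj X} {v : F.obj Y} (huv : F.map (ofHom f) u = F.map (ofHom g) v) :
    ∃ w, F.map (ofHom i) w = u ∧ F.map (ofHom j) w = v := by
  cases isEmpty_or_nonempty P
  · have hdisj : ∀ x y, f x ≠ g y := fun x y h => isEmptyElim ((hsq.exists_iff x y).2 h).choose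
    exact ((hF i j f g hf hg hdisj hsq).2 u v huv).exists
  · exact exists_map_eq_of_isPullbackSq_of_nonempty F hf hg hsq huv

end Pullback

namespace IsLaxExtension

variable {F : Type u ⥤ Type u} {Λ : Relator F} (hlax : IsLaxExtension F Λ)
include hlax

lemma map_span {A X Y : Type u} (f : A → X) (g : A → Y) (w : F.obj A) :
    Λ.map (fun x y => ∃ a, f a = x ∧ g a = y) (F.map (ofHom f) w) (F.map (ofHom g) w) :=
  hlax.2 (relConv (fgraph f)) (fgraph g) _ _ ⟨w, (hlax.1 f).2 _ w rfl, (hlax.1 g).1 w _ rfl⟩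

lemma map_eq_of_map_fgraph (hn : IsNormal F Λ) {X Y : Type u} {f : X → Y} {u : F.obj X}
    {v : F.obj Y} (h : Λ.map (fgraph f) u v) : F.map (ofHom f) u = v := by
  have hcomp := hlax.2 (relConv (fgraph f)) (fgraph f) _ v ⟨u, (hlax.1 f).2 _ u rfl, h⟩
  refine (hn Y _ _).1 (Λ.mono ?_ _ _ hcomp)
  rintro _ _ ⟨x, rfl, rfl⟩
  rfl

lemma map_difunctional_iff (hn : IsNormal F Λ) {X Y Z : Type u} {r : X → Y → Prop}
    {f : X → Z} {g : Y → Z} (hr : ∀ x y, r x y ↔ f x = g y) (u : F.obj X) (v : F.obj Y) :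
    Λ.map r u v ↔ F.map (ofHom f) u = F.map (ofHom g) v := by
  constructor
  · intro h
    have hcomp := hlax.2 r (fgraph g) u _ ⟨v, h, (hlax.1 g).1 v _ rfl⟩
    refine hlax.map_eq_of_map_fgraph hn (Λ.mono ?_ _ _ hcomp)
    rintro x _ ⟨y, hxy, rfl⟩
    exact (hr x y).1 hxy
  · intro h
    have hcomp := hlax.2 (fgraph f) (relConv (fgraph g)) u v
      ⟨_, (hlax.1 f).1 u _ rfl, (hlax.1 g).2 _ v h.symm⟩
    refine Λ.mono ?_ _ _ hcomp
    rintro x y ⟨z, rfl, hz⟩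
    exact (hr x y).2 hz.symm

end IsLaxExtension

/-- For a lax extension `Λ` of `F`:
(1) for every relation `r : X ⇸ Y` with domain inclusion `d_r : dom(r) ↪ X`, the
image of `F d_r` is contained in the domain of `Λr`;
(2) if `Λ` is normal then `Λ(r°) = (Λr)°` for every difunctional `r`;
(3) if `Λ` is normal and `F` preserves empty intersections then
`Λ(j · i°) = Fj · (Fi)°` for all injective `i : A → X`, `j : A → Y`. -/
theorem stmt10 (F : Type u ⥤ Type u) (Λ : Relator F) (hlax : IsLaxExtension F Λ) :
    (∀ (X Y : Type u) (r : X → Y → Prop) (w : F.obj {x : X // ∃ y, r x y}),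
      ∃ v : F.obj Y, Λ.map r (F.map (TypeCat.ofHom (Subtype.val : {x : X // ∃ y, r x y} → X)) w) v)
    ∧
    (IsNormal F Λ →
      ∀ (X Y : Type u) (r : X → Y → Prop), IsDifunctional r →
        ∀ (v : F.obj Y) (u : F.obj X), Λ.map (relConv r) v u ↔ Λ.map r u v)
    ∧
    (IsNormal F Λ → PreservesEmptyIntersections F →
      ∀ (A X Y : Type u) (i : A → X) (j : A → Y),
        Function.Injective i → Function.Injective j →
        ∀ (u : F.obj X) (v : F.obj Y),
          Λ.map (fun x y => ∃ a, i a = x ∧ j a = y) u v ↔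
            ∃ w : F.obj A, F.map (TypeCat.ofHom i) w = u ∧ F.map (TypeCat.ofHom j) w = v) := by
  refine ⟨fun X Y r w => ?_, fun hn X Y r ⟨Z, f, g, hr⟩ v u => ?_,
    fun hn hF A X Y i j hi hj u v => ?_⟩
  · choose c hc using fun d : {x : X // ∃ y, r x y} => d.2
    refine ⟨_, Λ.mono ?_ _ _ (hlax.map_span Subtype.val c w)⟩
    rintro _ _ ⟨d, rfl, rfl⟩
    exact hc d
  · rw [hlax.map_difunctional_iff hn (r := relConv r) (fun y x => (hr x y).trans eq_comm),
      hlax.map_difunctional_iff hn hr]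
    exact eq_comm
  · have hsq := isPullbackSq_inl_spanCospanRight (i := i) hj
    rw [hlax.map_difunctional_iff hn hsq.exists_iff]
    refine ⟨exists_map_eq_of_isPullbackSq hF Sum.inl_injective
      (injective_spanCospanRight hi hj) hsq, ?_⟩
    rintro ⟨w, rfl, rfl⟩
    exact (hlax.map_difunctional_iff hn hsq.exists_iff _ _).1 (hlax.map_span i j w)
end

section
/- For a set functor F, the following are equivalent: (1) F preserves inverse images; (2) F admits a normal lax extension, and every normal lax extension of F preserves composition with partial monomorphisms; (3) F admits a normal lax extension that preserves composition with partial monomorphisms; (4) F preserves empty intersections, admits a normal lax extension, and every normal lax extension of F preserves composition with subidentities; (5) F preserves empty intersections and admits a normal lax extension that preserves composition with subidentities. -/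
open CategoryTheory Function

universe u

/-- `F` preserves inverse images: it preserves every pullback of a cospan whose
second leg is injective. -/
def PreservesInverseImages (F : Type u ⥤ Type u) : Prop :=
  ∀ {P X B A : Type u} (p : P → X) (q : P → B) (f : X → A) (m : B → A),
    Function.Injective m → IsPullbackSq p q f m →
      IsPullbackSq (F.map (TypeCat.ofHom p)) (F.map (TypeCat.ofHom q)) (F.map (TypeCat.ofHom f)) (F.map (TypeCat.ofHom m))

/-- A partial monomorphism is a relation of the form `j · i°` with `i`, `j` injective. -/
def IsPartialMono {Y Z : Type u} (t : Y → Z → Prop) : Prop :=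
  ∃ (S : Type u) (i : S → Y) (j : S → Z), Function.Injective i ∧ Function.Injective j ∧
    ∀ y z, t y z ↔ ∃ s, i s = y ∧ j s = z

/-- `Λ` preserves composition with partial monomorphisms. -/
def PreservesPartialMonoComp (F : Type u ⥤ Type u) (Λ : Relator F) : Prop :=
  ∀ {X Y : Type u} (r : X → Y → Prop),
    (∀ {Z : Type u} (t : Y → Z → Prop), IsPartialMono t →
      ∀ (u : F.obj X) (w : F.obj Z),
        Λ.map (relComp t r) u w ↔ relComp (Λ.map t) (Λ.map r) u w) ∧
    (∀ {W : Type u} (t' : W → X → Prop), IsPartialMono t' →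
      ∀ (u : F.obj W) (v : F.obj Y),
        Λ.map (relComp r t') u v ↔ relComp (Λ.map r) (Λ.map t') u v)

/-!
Every normal lax extension `Λ` satisfies `F α u = F β v` whenever `Λ r u v` and `r` lies in the
kernel of the cospan `(α, β)`. Applied to characteristic maps, and combined with preservation of
inverse images, this shows that `Λ (m · s)` only relates elements in the image of `F m`, which
splits composites with partial monomorphisms. Conversely, if `F f u = F m v` then
`Λ (f · 1_S) u (F f u)` for `S = f⁻¹(range m)`; splitting off the subidentity `1_S` shows that `u`
comes from `S`, i.e. from the pullback. With subidentities only, this needs a retraction onto `S`,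
and an empty `S` is handled by preservation of empty intersections.

A normal lax extension of a functor preserving inverse images relates `u` and `v` along `r` when
all restrictions of `u` and `v` are identified by every cospan compatible with `r`. Its relax
property rests on single cospans: `F f u = F g v` identifies `u` and `v` along every `(α, β)`
compatible with the kernel of `(f, g)`, since both restrict to `range f ∩ range g`, on which `α`
and `β` induce the same map.
-/

lemma map_map (F : Type u ⥤ Type u) {X Y Z : Type u} (f : X → Y) (g : Y → Z) (u : F.obj X) :
    F.map (↾g) (F.map (↾f) u) = F.map (↾(g ∘ f)) u :=
  (F.map_comp_apply (↾f) (↾g) u).symm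

lemma map_id' (F : Type u ⥤ Type u) {X : Type u} (u : F.obj X) : F.map (↾(id : X → X)) u = u :=
  F.map_id_apply X u

lemma relConv_relComp {X Y Z : Type u} (s : Y → Z → Prop) (r : X → Y → Prop) :
    relConv (relComp s r) = relComp (relConv r) (relConv s) :=
  funext fun _ => funext fun _ => propext <| exists_congr fun _ => and_comm

lemma IsPullbackSq.injective_fst {P X B A : Type u} {p : P → X} {q : P → B} {f : X → A}
    {m : B → A} (hsq : IsPullbackSq p q f m) (hm : Injective m) : Injective p := by
  intro w w' h
  have hq : q w = q w' := hm <| by rw [← hsq.1, ← hsq.1, h]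
  obtain ⟨_, -, huniq⟩ := hsq.2 (p w) (q w) (hsq.1 w)
  exact (huniq w ⟨rfl, rfl⟩).trans (huniq w' ⟨h.symm, hq.symm⟩).symm

namespace IsLaxExtension

variable {F : Type u ⥤ Type u} {Λ : Relator F}

lemma map_of_map_of_map (hL : IsLaxExtension F Λ) {X Y Z : Type u} {r : X → Y → Prop}
    {s : Y → Z → Prop} {t : X → Z → Prop} {u : F.obj X} {v : F.obj Y} {w : F.obj Z}
    (hr : Λ.map r u v) (hs : Λ.map s v w) (hrst : ∀ x z, relComp s r x z → t x z) :
    Λ.map t u w :=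
  Λ.mono hrst u w (hL.2 r s u w ⟨v, hr, hs⟩)

lemma map_graph (hL : IsLaxExtension F Λ) {X Y : Type u} (f : X → Y) (u : F.obj X) :
    Λ.map (fgraph f) u (F.map (↾f) u) :=
  (hL.1 f).1 u _ rfl

lemma map_conv_graph (hL : IsLaxExtension F Λ) {X Y : Type u} (f : X → Y) (u : F.obj X) :
    Λ.map (relConv (fgraph f)) (F.map (↾f) u) u :=
  (hL.1 f).2 _ u rfl

lemma map_eq_map_of_map (hL : IsLaxExtension F Λ) (hN : IsNormal F Λ) {X Y V : Type u}
    {r : X → Y → Prop} {u : F.obj X} {v : F.obj Y} (h : Λ.map r u v) {f : X → V} {g : Y → V}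
    (hfg : ∀ x y, r x y → f x = g y) : F.map (↾f) u = F.map (↾g) v :=
  (hN V _ _).1 <| hL.map_of_map_of_map (hL.2 _ _ _ _ ⟨u, hL.map_conv_graph f u, h⟩)
    (hL.map_graph g v) fun _ _ ⟨y, ⟨x, hfx, hxy⟩, hgy⟩ => hfx.symm.trans ((hfg x y hxy).trans hgy)

lemma injective_map (hL : IsLaxExtension F Λ) (hN : IsNormal F Λ) {B A : Type u} {m : B → A}
    (hm : Injective m) : Injective (F.map (↾m)) := by
  intro a b hab
  have hb := hL.map_conv_graph m b
  rw [← hab] at hb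
  exact (hN B a b).1 <| hL.map_of_map_of_map (hL.map_graph m a) hb
    fun _ _ ⟨_, hxz, hzy⟩ => hm (hxz.trans hzy.symm)

end IsLaxExtension

def Relator.conv {F : Type u ⥤ Type u} (Λ : Relator F) : Relator F where
  map r u v := Λ.map (relConv r) v u
  mono hrs u v := Λ.mono (fun y x => hrs x y) v u

lemma IsLaxExtension.conv {F : Type u ⥤ Type u} {Λ : Relator F} (hL : IsLaxExtension F Λ) :
    IsLaxExtension F Λ.conv :=
  ⟨fun f => ⟨fun u v => (hL.1 f).2 v u, fun v u => (hL.1 f).1 u v⟩,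
    fun r s u w ⟨v, hr, hs⟩ => by
      simpa only [Relator.conv, relConv_relComp] using hL.2 _ _ w u ⟨v, hs, hr⟩⟩

lemma IsNormal.conv {F : Type u ⥤ Type u} {Λ : Relator F} (hN : IsNormal F Λ) :
    IsNormal F Λ.conv :=
  fun X u v => by
    have hEq : relConv (@Eq X) = Eq := funext fun _ => funext fun _ => propext eq_comm
    simpa only [Relator.conv, hEq, eq_comm] using hN X v u

lemma IsPartialMono.conv {Y Z : Type u} {t : Y → Z → Prop} (ht : IsPartialMono t) :
    IsPartialMono (relConv t) :=
  let ⟨S, i, j, hi, hj, ht⟩ := ht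
  ⟨S, j, i, hj, hi, fun z y => (ht y z).trans (exists_congr fun _ => and_comm)⟩

namespace PreservesInverseImages

variable {F : Type u ⥤ Type u} {Λ : Relator F}

lemma mem_range_map_val_preimage (hF : PreservesInverseImages F) {X A : Type u} (f : X → A)
    {S : Set A} {u : F.obj X}
    (h : F.map (↾f) u ∈ Set.range (F.map (↾(Subtype.val : S → A)))) :
    u ∈ Set.range (F.map (↾(Subtype.val : f ⁻¹' S → X))) := by
  have hsq : IsPullbackSq (Subtype.val : f ⁻¹' S → X) (fun x => ⟨f x.1, x.2⟩) f
      (Subtype.val : S → A) :=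
    ⟨fun _ => rfl, fun x a h => ⟨⟨x, by rw [Set.mem_preimage, h]; exact a.2⟩,
      ⟨rfl, Subtype.ext h⟩, fun _ hx' => Subtype.ext hx'.1⟩⟩
  obtain ⟨s, hs⟩ := h
  obtain ⟨u₀, ⟨hu₀, -⟩, -⟩ := (hF _ _ _ _ Subtype.val_injective hsq).2 u s hs.symm
  exact ⟨u₀, hu₀⟩

lemma mem_range_map_val_of_map_indicator (hF : PreservesInverseImages F) {Y T : Type u}
    (P : Y → Prop) {v : F.obj Y} {t : F.obj T}
    (h : F.map (↾fun y => ULift.up.{u} (P y)) v = F.map (↾fun _ => ULift.up.{u} True) t) :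
    v ∈ Set.range (F.map (↾(Subtype.val : Subtype P → Y))) := by
  have hpre : (fun y => ULift.up.{u} (P y)) ⁻¹' {ULift.up True} = {y | P y} :=
    Set.ext fun y => by simp
  have := hF.mem_range_map_val_preimage (fun y => ULift.up.{u} (P y)) (S := {ULift.up True})
    (u := v) ⟨F.map (↾fun _ => ⟨ULift.up True, rfl⟩) t, by rw [map_map]; exact h.symm⟩
  rw [hpre] at this
  exact this

lemma mem_range_map_of_map_comp_graph (hF : PreservesInverseImages F)
    (hL : IsLaxExtension F Λ) (hN : IsNormal F Λ) {X B Z : Type u} {m : B → Z}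
    {s : X → B → Prop} {u : F.obj X} {w : F.obj Z} (h : Λ.map (relComp (fgraph m) s) u w) :
    w ∈ Set.range (F.map (↾m)) := by
  obtain ⟨w₀, rfl⟩ := hF.mem_range_map_val_of_map_indicator (· ∈ Set.range m)
    (hL.map_eq_map_of_map hN h (f := fun _ => ULift.up True)
      fun _ z ⟨b, _, hbz⟩ => congrArg _ (eq_true ⟨b, hbz⟩).symm).symm
  refine ⟨F.map (↾(Set.rangeSplitting m)) w₀, ?_⟩
  rw [map_map]
  exact congrArg (fun k => F.map (↾k) w₀) (funext (Set.apply_rangeSplitting m))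

lemma exists_map_eq_of_map_comp_graph (hF : PreservesInverseImages F)
    (hL : IsLaxExtension F Λ) (hN : IsNormal F Λ) {X B Z : Type u} {m : B → Z}
    (hm : Injective m) {s : X → B → Prop} {u : F.obj X} {w : F.obj Z}
    (h : Λ.map (relComp (fgraph m) s) u w) : ∃ v, F.map (↾m) v = w ∧ Λ.map s u v := by
  obtain ⟨v, rfl⟩ := hF.mem_range_map_of_map_comp_graph hL hN h
  exact ⟨v, rfl, hL.map_of_map_of_map h (hL.map_conv_graph m v)
    fun _ _ ⟨_, ⟨_, hb', hmb'⟩, hmb⟩ => hm (hmb'.trans hmb.symm) ▸ hb'⟩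

lemma map_comp_iff_of_isPartialMono (hF : PreservesInverseImages F)
    (hL : IsLaxExtension F Λ) (hN : IsNormal F Λ) {X Y Z : Type u} {r : X → Y → Prop}
    {t : Y → Z → Prop} (ht : IsPartialMono t) (u : F.obj X) (w : F.obj Z) :
    Λ.map (relComp t r) u w ↔ relComp (Λ.map t) (Λ.map r) u w := by
  obtain ⟨S, i, j, -, hj, ht⟩ := ht
  refine ⟨fun h => ?_, hL.2 r t u w⟩
  have h' : Λ.map (relComp (fgraph j) (relComp (relConv (fgraph i)) r)) u w :=
    Λ.mono (fun _ z ⟨y, hxy, hyz⟩ =>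
      let ⟨c, hc, hcz⟩ := (ht y z).1 hyz
      ⟨c, ⟨y, hxy, hc⟩, hcz⟩) u w h
  obtain ⟨v, rfl, hv⟩ := hF.exists_map_eq_of_map_comp_graph hL hN hj h'
  exact ⟨F.map (↾i) v,
    hL.map_of_map_of_map hv (hL.map_graph i v) fun _ _ ⟨_, ⟨_, hxy, hc⟩, hcy⟩ =>
      hc.symm.trans hcy ▸ hxy,
    hL.map_of_map_of_map (hL.map_conv_graph i v) (hL.map_graph j v) fun y z hyz =>
      (ht y z).2 hyz⟩

theorem preservesPartialMonoComp (hF : PreservesInverseImages F) (hL : IsLaxExtension F Λ)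
    (hN : IsNormal F Λ) : PreservesPartialMonoComp F Λ := fun r =>
  ⟨fun _ ht u w => hF.map_comp_iff_of_isPartialMono hL hN ht u w, fun _ ht' u v => by
    have := hF.map_comp_iff_of_isPartialMono hL.conv hN.conv ht'.conv (r := relConv r) v u
    simp only [Relator.conv, relConv_relComp] at this
    exact this.trans (exists_congr fun _ => and_comm)⟩

theorem preservesEmptyIntersections (hF : PreservesInverseImages F) :
    PreservesEmptyIntersections F :=
  fun p q i j _ hj _ hsq => hF p q i j hj hsq

end PreservesInverseImages

lemma isPartialMono_conv_graph {S X : Type u} {i : S → X} (hi : Injective i) :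
    IsPartialMono (relConv (fgraph i)) :=
  ⟨S, i, id, hi, injective_id, fun _ _ => ⟨fun h => ⟨_, h, rfl⟩, fun ⟨_, h, hs⟩ => hs ▸ h⟩⟩

lemma IsSubId.isPartialMono {X : Type u} {s : X → X → Prop} (hs : IsSubId s) :
    IsPartialMono s :=
  ⟨{x // s x x}, Subtype.val, Subtype.val, Subtype.val_injective, Subtype.val_injective,
    fun y z => ⟨fun h => ⟨⟨y, (hs y z h).symm ▸ h⟩, rfl, hs y z h⟩,
      fun ⟨x, hy, hz⟩ => hy ▸ hz ▸ x.2⟩⟩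

lemma PreservesPartialMonoComp.preservesSubIdComp {F : Type u ⥤ Type u} {Λ : Relator F}
    (h : PreservesPartialMonoComp F Λ) : PreservesSubIdComp F Λ := fun r =>
  ⟨fun _ hs => (h r).2 _ hs.isPartialMono, fun _ hs => (h r).1 _ hs.isPartialMono⟩

def diagOn {X : Type u} (S : Set X) : X → X → Prop := fun x x' => x = x' ∧ x ∈ S

lemma isSubId_diagOn {X : Type u} (S : Set X) : IsSubId (diagOn S) := fun _ _ h => h.1

lemma PreservesInverseImages.of_mem_range_map_val {F : Type u ⥤ Type u}
    (hinj : ∀ {B A : Type u} {m : B → A}, Injective m → Injective (F.map (↾m)))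
    (hres : ∀ {X B A : Type u} (f : X → A) {m : B → A}, Injective m →
      ∀ (u : F.obj X) (v : F.obj B), F.map (↾f) u = F.map (↾m) v →
        u ∈ Set.range (F.map (↾(Subtype.val : f ⁻¹' Set.range m → X)))) :
    PreservesInverseImages F := by
  intro P X B A p q f m hm hsq
  refine ⟨fun w => by simp only [map_map, Function.comp_def, hsq.1], fun u v h => ?_⟩
  obtain ⟨u₀, rfl⟩ := hres f hm u v h
  choose ψ hψ using fun x : f ⁻¹' Set.range m => (hsq.2 x.1 _ x.2.choose_spec.symm).exists
  have hpψ : F.map (↾p) (F.map (↾ψ) u₀) = F.map (↾Subtype.val) u₀ := by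
    rw [map_map]
    exact congrArg (fun k => F.map (↾k) u₀) (funext fun x => (hψ x).1)
  refine ⟨F.map (↾ψ) u₀, ⟨hpψ, hinj hm ?_⟩,
    fun w ⟨hw, _⟩ => hinj (hsq.injective_fst hm) (hw.trans hpψ.symm)⟩
  rw [map_map, ← h, ← hpψ, map_map F p f]
  exact congrArg (fun k => F.map (↾k) _) (funext fun w => (hsq.1 w).symm)

namespace IsLaxExtension

variable {F : Type u ⥤ Type u} {Λ : Relator F}

lemma map_comp_graph_diagOn (hL : IsLaxExtension F Λ) {X B A : Type u} {f : X → A}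
    {m : B → A} {u : F.obj X} {v : F.obj B} (h : F.map (↾f) u = F.map (↾m) v) :
    Λ.map (relComp (fgraph f) (diagOn (f ⁻¹' Set.range m))) u (F.map (↾f) u) := by
  have hm := hL.map_graph m v
  have hm' := hL.map_conv_graph m v
  rw [← h] at hm hm'
  exact hL.map_of_map_of_map (hL.map_of_map_of_map (hL.map_graph f u) hm' fun _ _ => id) hm
    fun x _ ⟨b, ⟨_, hfx, hmb⟩, hba⟩ =>
      ⟨x, ⟨rfl, b, hmb.trans hfx.symm⟩, hfx.trans (hmb.symm.trans hba)⟩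

lemma mem_range_map_val_of_map_diagOn (hL : IsLaxExtension F Λ) (hN : IsNormal F Λ)
    {X : Type u} {S : Set X} [Nonempty S] {u u' : F.obj X} (h : Λ.map (diagOn S) u u') :
    u ∈ Set.range (F.map (↾(Subtype.val : S → X))) := by
  classical
  let ρ : X → S := fun x => if hx : x ∈ S then ⟨x, hx⟩ else Classical.arbitrary S
  refine ⟨F.map (↾ρ) u', ?_⟩
  rw [map_map]
  exact (hL.map_eq_map_of_map hN h (f := id) (g := Subtype.val ∘ ρ)
    fun x _ ⟨hxx', hx⟩ => by simp [ρ, ← hxx', hx]).symm.trans (map_id' F u)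

end IsLaxExtension

lemma PreservesEmptyIntersections.mem_range_map_of_map {F : Type u ⥤ Type u} {Λ : Relator F}
    (hPEI : PreservesEmptyIntersections F) (hL : IsLaxExtension F Λ) (hN : IsNormal F Λ)
    {X Y : Type u} {r : X → Y → Prop} (hr : ∀ x y, ¬ r x y) {u : F.obj X} {v : F.obj Y}
    (h : Λ.map r u v) {S : Type u} [IsEmpty S] (g : S → X) : u ∈ Set.range (F.map (↾g)) := by
  have hsq : IsPullbackSq (isEmptyElim : S → X) (isEmptyElim : S → Y) Sum.inl Sum.inr :=
    ⟨isEmptyElim, fun _ _ h => (Sum.inl_ne_inr h).elim⟩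
  obtain ⟨w, ⟨hw, -⟩, -⟩ := (hPEI _ _ _ _ Sum.inl_injective Sum.inr_injective
    (fun _ _ => Sum.inl_ne_inr) hsq).2 u v
      (hL.map_eq_map_of_map hN h fun x y hxy => (hr x y hxy).elim)
  exact ⟨w, Subsingleton.elim g isEmptyElim ▸ hw⟩

theorem PreservesPartialMonoComp.preservesInverseImages {F : Type u ⥤ Type u} {Λ : Relator F}
    (hpm : PreservesPartialMonoComp F Λ) (hL : IsLaxExtension F Λ) (hN : IsNormal F Λ) :
    PreservesInverseImages F := by
  refine PreservesInverseImages.of_mem_range_map_val (hL.injective_map hN)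
    fun {X _ _} f {m} _ u v h => ?_
  have h' : Λ.map (relComp (fgraph (f ∘ Subtype.val))
      (relConv (fgraph (Subtype.val : f ⁻¹' Set.range m → X)))) u (F.map (↾f) u) :=
    Λ.mono (fun x _ ⟨_, ⟨hxx', hx⟩, hfa⟩ => ⟨⟨x, hx⟩, rfl, hxx' ▸ hfa⟩) _ _
      (hL.map_comp_graph_diagOn h)
  obtain ⟨u₀, hu₀, -⟩ :=
    ((hpm _).2 _ (isPartialMono_conv_graph Subtype.val_injective) _ _).1 h'
  exact ⟨u₀, (hL.map_eq_map_of_map hN hu₀ (f := id) (g := Subtype.val)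
    fun _ _ => Eq.symm).symm.trans (map_id' F u)⟩

theorem PreservesSubIdComp.preservesInverseImages {F : Type u ⥤ Type u} {Λ : Relator F}
    (hsub : PreservesSubIdComp F Λ) (hPEI : PreservesEmptyIntersections F)
    (hL : IsLaxExtension F Λ) (hN : IsNormal F Λ) : PreservesInverseImages F := by
  refine PreservesInverseImages.of_mem_range_map_val (hL.injective_map hN)
    fun {_ _ _} f {m} _ u v h => ?_
  obtain ⟨u', hu', -⟩ :=
    ((hsub (fgraph f)).1 _ (isSubId_diagOn _) _ _).1 (hL.map_comp_graph_diagOn h)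
  rcases isEmpty_or_nonempty (f ⁻¹' Set.range m) with hS | hS
  · exact hPEI.mem_range_map_of_map hL hN
      (fun x _ hx => isEmptyElim (⟨x, hx.2⟩ : f ⁻¹' Set.range m)) hu' _
  · exact hL.mem_range_map_val_of_map_diagOn hN hu'

def CospanEq (F : Type u ⥤ Type u) {X Y : Type u} (r : X → Y → Prop) (u : F.obj X)
    (v : F.obj Y) : Prop :=
  ∀ (V : Type u) (α : X → V) (β : Y → V), (∀ x y, r x y → α x = β y) →
    F.map (↾α) u = F.map (↾β) v

namespace CospanEq

variable {F : Type u ⥤ Type u} {X Y : Type u} {r : X → Y → Prop} {u : F.obj X} {v : F.obj Y}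

lemma mono (h : CospanEq F r u v) {s : X → Y → Prop} (hrs : ∀ x y, r x y → s x y) :
    CospanEq F s u v :=
  fun V α β hαβ => h V α β fun x y hxy => hαβ x y (hrs x y hxy)

lemma mem_range_right (h : CospanEq F r u v) (hF : PreservesInverseImages F) :
    v ∈ Set.range (F.map (↾(Subtype.val : {y // ∃ x, r x y} → Y))) :=
  hF.mem_range_map_val_of_map_indicator _
    (h _ (fun _ => ULift.up True) _ fun x _ hxy => congrArg _ (eq_true ⟨x, hxy⟩).symm).symm

lemma mem_range_left (h : CospanEq F r u v) (hF : PreservesInverseImages F) :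
    u ∈ Set.range (F.map (↾(Subtype.val : {x // ∃ y, r x y} → X))) :=
  hF.mem_range_map_val_of_map_indicator _
    (h _ _ (fun _ => ULift.up True) fun _ y hxy => congrArg _ (eq_true ⟨y, hxy⟩))

end CospanEq

namespace PreservesInverseImages

variable {F : Type u ⥤ Type u}

lemma cospanEq_of_injective (hF : PreservesInverseImages F) {X W Q : Type u} {f : X → Q}
    {ι : W → Q} (hι : Injective ι) {u : F.obj X} {w : F.obj W}
    (h : F.map (↾f) u = F.map (↾ι) w) : CospanEq F (fun x q => f x = ι q) u w := by
  intro V α δ hαδ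
  have hsq : IsPullbackSq (fun p : {p : X × W // f p.1 = ι p.2} => p.1.1) (fun p => p.1.2) f ι :=
    ⟨fun p => p.2, fun x q h =>
      ⟨⟨(x, q), h⟩, ⟨rfl, rfl⟩, fun _ hp => Subtype.ext (Prod.ext hp.1 hp.2)⟩⟩
  obtain ⟨p, ⟨rfl, rfl⟩, -⟩ := (hF _ _ _ _ hι hsq).2 u w h
  rw [map_map, map_map]
  exact congrArg (fun k => F.map (↾k) p) (funext fun p => hαδ _ _ p.2)

lemma cospanEq_of_map_eq (hF : PreservesInverseImages F) {X Y Q : Type u} {f : X → Q}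
    {g : Y → Q} {u : F.obj X} {v : F.obj Y} (h : F.map (↾f) u = F.map (↾g) v) :
    CospanEq F (fun x y => f x = g y) u v := by
  intro V α β hαβ
  obtain ⟨u₁, rfl⟩ := hF.mem_range_map_val_preimage f (S := Set.range g)
    ⟨F.map (↾(Set.rangeFactorization g)) v, by rw [map_map]; exact h.symm⟩
  set f₁ : f ⁻¹' Set.range g → Q := f ∘ Subtype.val
  have hw : F.map (↾f₁) u₁ = F.map (↾(Subtype.val : Set.range f₁ → Q))
      (F.map (↾(Set.rangeFactorization f₁)) u₁) := by
    rw [map_map]; rfl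
  let δ : Set.range f₁ → V := fun q => α (Set.rangeSplitting f₁ q).1
  have hδ : ∀ (q : Set.range f₁) (y : Y), g y = q → δ q = β y := fun q y hy =>
    hαβ _ _ ((Set.apply_rangeSplitting f₁ q).trans hy.symm)
  calc F.map (↾α) (F.map (↾Subtype.val) u₁) = F.map (↾(α ∘ Subtype.val)) u₁ := map_map ..
    _ = F.map (↾δ) (F.map (↾(Set.rangeFactorization f₁)) u₁) :=
      hF.cospanEq_of_injective Subtype.val_injective hw _ _ _ fun x q hxq => by
        obtain ⟨y, hy⟩ := x.2
        exact (hαβ _ y hy.symm).trans (hδ q y (hy.trans hxq)).symm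
    _ = F.map (↾β) v :=
      (hF.cospanEq_of_injective Subtype.val_injective (h.symm.trans ((map_map ..).trans hw))
        _ _ _ fun y q hyq => (hδ q y hyq).symm).symm

end PreservesInverseImages

/-- Quantifying over all restrictions `u₀`, `v₀` of `u`, `v` is what makes this relator lax: in a
composite, the middle element can be restricted to the points having both a predecessor and a
successor, on which a connecting map is well defined. -/
def cospanRelator (F : Type u ⥤ Type u) : Relator F where
  map {X Y} r u v := ∀ (X₀ Y₀ : Type u) (i : X₀ → X) (j : Y₀ → Y) (u₀ : F.obj X₀)
    (v₀ : F.obj Y₀), F.map (↾i) u₀ = u → F.map (↾j) v₀ = v →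
      CospanEq F (fun x y => r (i x) (j y)) u₀ v₀
  mono hrs _ _ h X₀ Y₀ i j u₀ v₀ hu hv := (h X₀ Y₀ i j u₀ v₀ hu hv).mono fun _ _ => hrs _ _

namespace PreservesInverseImages

variable {F : Type u ⥤ Type u}

lemma cospanRelator_map_of_map_eq (hF : PreservesInverseImages F) {X Y Q : Type u}
    {r : X → Y → Prop} {f : X → Q} {g : Y → Q} (hfg : ∀ x y, f x = g y → r x y)
    {u : F.obj X} {v : F.obj Y} (h : F.map (↾f) u = F.map (↾g) v) :
    (cospanRelator F).map r u v := by
  rintro X₀ Y₀ i j u₀ v₀ rfl rfl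
  exact (hF.cospanEq_of_map_eq
    ((map_map F i f u₀).symm.trans (h.trans (map_map F j g v₀)))).mono fun _ _ => hfg _ _

lemma cospanRelator_map_comp (hF : PreservesInverseImages F) {X Y Z : Type u}
    {r : X → Y → Prop} {s : Y → Z → Prop} {u : F.obj X} {v : F.obj Y} {w : F.obj Z}
    (hr : (cospanRelator F).map r u v) (hs : (cospanRelator F).map s v w) :
    (cospanRelator F).map (relComp s r) u w := by
  intro X₀ Z₀ i k u₀ w₀ hu hw V α γ hαγ
  obtain ⟨v₁, rfl⟩ := (hr X₀ Y i id u₀ v hu (map_id' F v)).mem_range_right hF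
  obtain ⟨v₂, rfl⟩ := (hs _ Z₀ Subtype.val k v₁ w₀ rfl hw).mem_range_left hF
  let Y₀ := {y : {y // ∃ x, r (i x) y} // ∃ z, s y.1 (k z)}
  let j : Y₀ → Y := fun y => y.1.1
  let β : Y₀ → V := fun y => α y.1.2.choose
  calc F.map (↾α) u₀ = F.map (↾β) v₂ :=
        hr X₀ _ i j u₀ v₂ hu (map_map ..).symm V α β fun x y hxy => by
          obtain ⟨z, hz⟩ := y.2
          exact (hαγ x z ⟨_, hxy, hz⟩).trans (hαγ _ z ⟨_, y.1.2.choose_spec, hz⟩).symm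
    _ = F.map (↾γ) w₀ :=
        hs _ Z₀ j k v₂ w₀ (map_map ..).symm hw V β γ fun y z hyz =>
          hαγ _ z ⟨_, y.1.2.choose_spec, hyz⟩

lemma isLaxExtension_cospanRelator (hF : PreservesInverseImages F) :
    IsLaxExtension F (cospanRelator F) :=
  ⟨fun _ => ⟨fun _ _ h => hF.cospanRelator_map_of_map_eq (g := id) (fun _ _ => id)
      (h.trans (map_id' F _).symm),
    fun _ _ h => hF.cospanRelator_map_of_map_eq (f := id) (fun _ _ => Eq.symm)
      ((map_id' F _).trans h.symm)⟩,
    fun _ _ _ _ ⟨_, hr, hs⟩ => hF.cospanRelator_map_comp hr hs⟩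

lemma isNormal_cospanRelator (hF : PreservesInverseImages F) : IsNormal F (cospanRelator F) :=
  fun X u v => ⟨fun h => by
    simpa only [map_id'] using h X X id id u v (map_id' F u) (map_id' F v) X id id fun _ _ => id,
    fun h => hF.cospanRelator_map_of_map_eq (f := id) (g := id) (fun _ _ => id) (by rw [h])⟩

lemma exists_isLaxExtension_isNormal (hF : PreservesInverseImages F) :
    ∃ Λ : Relator F, IsLaxExtension F Λ ∧ IsNormal F Λ :=
  ⟨cospanRelator F, hF.isLaxExtension_cospanRelator, hF.isNormal_cospanRelator⟩

end PreservesInverseImages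

/-- For a set functor `F`, the following are equivalent:
(1) `F` preserves inverse images;
(2) `F` admits a normal lax extension and every normal lax extension of `F`
preserves composition with partial monomorphisms;
(3) `F` admits a normal lax extension that preserves composition with partial
monomorphisms;
(4) `F` preserves empty intersections, admits a normal lax extension, and every
normal lax extension of `F` preserves composition with subidentities;
(5) `F` preserves empty intersections and admits a normal lax extension that
preserves composition with subidentities. -/
theorem stmt11 (F : Type u ⥤ Type u) :
    (PreservesInverseImages F ↔
      ((∃ Λ : Relator F, IsLaxExtension F Λ ∧ IsNormal F Λ) ∧
        ∀ Λ : Relator F, IsLaxExtension F Λ → IsNormal F Λ →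
          PreservesPartialMonoComp F Λ))
    ∧
    (PreservesInverseImages F ↔
      (∃ Λ : Relator F, IsLaxExtension F Λ ∧ IsNormal F Λ ∧
        PreservesPartialMonoComp F Λ))
    ∧
    (PreservesInverseImages F ↔
      (PreservesEmptyIntersections F ∧
        (∃ Λ : Relator F, IsLaxExtension F Λ ∧ IsNormal F Λ) ∧
        ∀ Λ : Relator F, IsLaxExtension F Λ → IsNormal F Λ →
          PreservesSubIdComp F Λ))
    ∧
    (PreservesInverseImages F ↔
      (PreservesEmptyIntersections F ∧
        ∃ Λ : Relator F, IsLaxExtension F Λ ∧ IsNormal F Λ ∧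
          PreservesSubIdComp F Λ)) := by
  have pm (hF : PreservesInverseImages F) (Λ : Relator F) (hL : IsLaxExtension F Λ)
      (hN : IsNormal F Λ) : PreservesPartialMonoComp F Λ :=
    hF.preservesPartialMonoComp hL hN
  have sub (hF : PreservesInverseImages F) (Λ : Relator F) (hL : IsLaxExtension F Λ)
      (hN : IsNormal F Λ) : PreservesSubIdComp F Λ :=
    PreservesPartialMonoComp.preservesSubIdComp (pm hF Λ hL hN)
  refine ⟨⟨fun hF => ⟨hF.exists_isLaxExtension_isNormal, pm hF⟩, ?_⟩, ⟨fun hF => ?_, ?_⟩,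
    ⟨fun hF => ⟨hF.preservesEmptyIntersections, hF.exists_isLaxExtension_isNormal, sub hF⟩, ?_⟩,
    ⟨fun hF => ?_, ?_⟩⟩
  · rintro ⟨⟨Λ, hL, hN⟩, hpm⟩
    exact PreservesPartialMonoComp.preservesInverseImages (hpm Λ hL hN) hL hN
  · obtain ⟨Λ, hL, hN⟩ := hF.exists_isLaxExtension_isNormal
    exact ⟨Λ, hL, hN, pm hF Λ hL hN⟩
  · rintro ⟨Λ, hL, hN, hpm⟩
    exact hpm.preservesInverseImages hL hN
  · rintro ⟨hPEI, ⟨Λ, hL, hN⟩, hsub⟩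
    exact PreservesSubIdComp.preservesInverseImages (hsub Λ hL hN) hPEI hL hN
  · obtain ⟨Λ, hL, hN⟩ := hF.exists_isLaxExtension_isNormal
    exact ⟨hF.preservesEmptyIntersections, Λ, hL, hN, sub hF Λ hL hN⟩
  · rintro ⟨hPEI, Λ, hL, hN, hsub⟩
    exact hsub.preservesInverseImages hPEI hL hN
end

section
/- An endorelation φ : A ⇸ A is normal (i.e. its difunctional closure is reflexive) if and only if for every set X and all functions f, g : A → X, φ ≤ g° · f implies f = g. -/
universe u

/-- An endorelation `φ` on `A` is normal if its difunctional closure is reflexive. -/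
def NormalRel {A : Type u} (φ : A → A → Prop) : Prop :=
  ∃ c : A → A → Prop, IsDifunClosure φ c ∧ ∀ a, c a a

/-- An endorelation `φ : A ⇸ A` is normal (its difunctional
closure is reflexive) iff for every set `X` and all functions `f, g : A → X`,
`φ ≤ g° · f` implies `f = g`. -/
theorem stmt13 {A : Type u} (φ : A → A → Prop) :
    NormalRel φ ↔
      ∀ (X : Type u) (f g : A → X), (∀ a b, φ a b → f a = g b) → f = g := by
  constructor
  · rintro ⟨c, ⟨_, _, hmin⟩, hrefl⟩ X f g hfg
    funext a
    exact hmin (fun x y => f x = g y) ⟨X, f, g, fun _ _ => Iff.rfl⟩ hfg a a (hrefl a)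
  · intro h
    classical
    let s : A ⊕ A → A ⊕ A → Prop := fun p q =>
      match p, q with
      | .inl x, .inr y => φ x y
      | _, _ => False
    refine ⟨fun x y => Quot.mk s (Sum.inl x) = Quot.mk s (Sum.inr y),
      ⟨⟨Quot s, fun x => Quot.mk s (.inl x), fun y => Quot.mk s (.inr y),
        fun _ _ => Iff.rfl⟩,
       fun x y hxy => Quot.sound hxy, ?_⟩, ?_⟩
    · rintro d ⟨Z, f, g, hd⟩ hφd x y hxy
      rw [hd]
      let F : A ⊕ A → Z := fun p => match p with | .inl x => f x | .inr y => g y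
      have hF : ∀ p q, s p q → F p = F q := by
        rintro (x | x) (y | y) hs <;> simp only [s] at hs
        exact (hd x y).mp (hφd x y hs)
      exact congrArg (Quot.lift F hF) hxy
    · intro a
      have := h (Quot s) (fun x => Quot.mk s (.inl x)) (fun y => Quot.mk s (.inr y))
        (fun x y hxy => Quot.sound hxy)
      exact congrFun this a
end

section
/- Let A be a set and 𝒜 a submonoid of the monoid of endorelations on A under relational composition (i.e. 1_A ∈ 𝒜 and 𝒜 is closed under composition). Then the assignment sending a relation r : X ⇸ Y to the relation Ĥ_A^𝒜 r : X^A ⇸ Y^A is a lax extension of the exponential functor H_A = (−)^A. Furthermore: (1) if 𝒜 is closed under converses, then Ĥ_A^𝒜 preserves converses, i.e. Ĥ_A^𝒜(r°) = (Ĥ_A^𝒜 r)° for all r; (2) if every relation in 𝒜 is normal, then Ĥ_A^𝒜 is normal. -/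
open CategoryTheory Function

universe u

/-- The exponential functor `H_A = (−)^A`. -/
def expFunctor (A : Type u) : Type u ⥤ Type u where
  obj X := A → X
  map f := TypeCat.ofHom (fun h => f ∘ h)
  map_id := by intros; rfl
  map_comp := by intros; rfl

/-- The relator `Ĥ_A^𝒜` induced by a set `𝒜` of endorelations on `A`:
`f (Ĥ_A^𝒜 r) g` iff `φ ≤ g° · r · f` for some `φ ∈ 𝒜`. -/
def hatRelator (A : Type u) (𝒜 : Set (A → A → Prop)) : Relator (expFunctor A) where
  map r f g := ∃ φ ∈ 𝒜, ∀ a b, φ a b → r (f a) (g b)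
  mono h u v := fun ⟨φ, hφ, hp⟩ => ⟨φ, hφ, fun a b hab => h _ _ (hp a b hab)⟩

theorem NormalRel.refl_of_le_difunctional {A : Type u} {φ d : A → A → Prop} (hφ : NormalRel φ)
    (hd : IsDifunctional d) (hle : ∀ a b, φ a b → d a b) (a : A) : d a a := by
  obtain ⟨c, ⟨-, -, hmin⟩, hrefl⟩ := hφ
  exact hmin d hd hle a a (hrefl a)

namespace hatRelator

variable {A : Type u} {𝒜 : Set (A → A → Prop)}

theorem map_of_forall_apply (hid : (@Eq A) ∈ 𝒜) {X Y : Type u} {r : X → Y → Prop}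
    {f : A → X} {g : A → Y} (h : ∀ a, r (f a) (g a)) : (hatRelator A 𝒜).map r f g :=
  ⟨Eq, hid, fun a _ hab => hab ▸ h a⟩

theorem isRelaxExtension (hid : (@Eq A) ∈ 𝒜) : IsRelaxExtension (expFunctor A) (hatRelator A 𝒜) :=
  fun _ => ⟨fun _ _ huv => map_of_forall_apply hid (congrFun huv),
    fun _ _ huv => map_of_forall_apply hid (congrFun huv)⟩

theorem map_relComp (hcomp : ∀ φ ψ : A → A → Prop, φ ∈ 𝒜 → ψ ∈ 𝒜 → relComp ψ φ ∈ 𝒜)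
    {X Y Z : Type u} (r : X → Y → Prop) (s : Y → Z → Prop) (u : A → X) (w : A → Z) :
    relComp ((hatRelator A 𝒜).map s) ((hatRelator A 𝒜).map r) u w →
      (hatRelator A 𝒜).map (relComp s r) u w := by
  rintro ⟨v, ⟨φ, hφ, hr⟩, ⟨ψ, hψ, hs⟩⟩
  exact ⟨relComp ψ φ, hcomp φ ψ hφ hψ, fun a c ⟨b, hab, hbc⟩ => ⟨v b, hr a b hab, hs b c hbc⟩⟩

theorem isLaxExtension (hid : (@Eq A) ∈ 𝒜)
    (hcomp : ∀ φ ψ : A → A → Prop, φ ∈ 𝒜 → ψ ∈ 𝒜 → relComp ψ φ ∈ 𝒜) :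
    IsLaxExtension (expFunctor A) (hatRelator A 𝒜) :=
  ⟨isRelaxExtension hid, map_relComp hcomp⟩

theorem map_relConv_of_map (hconv : ∀ φ ∈ 𝒜, relConv φ ∈ 𝒜) {X Y : Type u}
    {r : X → Y → Prop} {f : A → X} {g : A → Y} :
    (hatRelator A 𝒜).map r f g → (hatRelator A 𝒜).map (relConv r) g f :=
  fun ⟨φ, hφ, h⟩ => ⟨relConv φ, hconv φ hφ, fun a b hab => h b a hab⟩

theorem map_relConv (hconv : ∀ φ ∈ 𝒜, relConv φ ∈ 𝒜) {X Y : Type u}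
    (r : X → Y → Prop) (g : A → Y) (f : A → X) :
    (hatRelator A 𝒜).map (relConv r) g f ↔ (hatRelator A 𝒜).map r f g :=
  ⟨map_relConv_of_map (r := relConv r) hconv, map_relConv_of_map hconv⟩

/-- A witness `φ ≤ v° · u` lies in the difunctional relation `u a = v b`, so this relation
contains the reflexive difunctional closure of `φ`. -/
theorem isNormal (hid : (@Eq A) ∈ 𝒜) (hnorm : ∀ φ ∈ 𝒜, NormalRel φ) :
    IsNormal (expFunctor A) (hatRelator A 𝒜) := by
  intro X u v
  constructor
  · rintro ⟨φ, hφ, h⟩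
    exact funext <| (hnorm φ hφ).refl_of_le_difunctional ⟨X, u, v, fun _ _ => Iff.rfl⟩ h
  · rintro rfl
    exact map_of_forall_apply hid fun _ => rfl

end hatRelator

/-- If `𝒜` is a submonoid of the monoid of endorelations on `A`
under relational composition, then `Ĥ_A^𝒜` is a lax extension of `H_A = (−)^A`.
Moreover: (1) if `𝒜` is closed under converses, then `Ĥ_A^𝒜` preserves converses;
(2) if every relation in `𝒜` is normal, then `Ĥ_A^𝒜` is normal. -/
theorem stmt14 (A : Type u) (𝒜 : Set (A → A → Prop))
    (hid : (@Eq A) ∈ 𝒜)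
    (hcomp : ∀ φ ψ : A → A → Prop, φ ∈ 𝒜 → ψ ∈ 𝒜 → relComp ψ φ ∈ 𝒜) :
    IsLaxExtension (expFunctor A) (hatRelator A 𝒜) ∧
    ((∀ φ ∈ 𝒜, relConv φ ∈ 𝒜) →
      ∀ (X Y : Type u) (r : X → Y → Prop)
        (g : (expFunctor A).obj Y) (f : (expFunctor A).obj X),
        (hatRelator A 𝒜).map (relConv r) g f ↔ (hatRelator A 𝒜).map r f g) ∧
    ((∀ φ ∈ 𝒜, NormalRel φ) → IsNormal (expFunctor A) (hatRelator A 𝒜)) :=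
  ⟨hatRelator.isLaxExtension hid hcomp,
    fun hconv _ _ => hatRelator.map_relConv hconv,
    hatRelator.isNormal hid⟩
end

section
/- Let A be a set and Λ a lax extension of the exponential functor H_A = (−)^A. Then the set S(Λ) = { φ : A ⇸ A | 1_A (Λφ) 1_A } is an upwards-closed submonoid of the monoid of endorelations on A under relational composition. Furthermore: (1) if Λ preserves converses, then S(Λ) is closed under converses; (2) if Λ is normal, then every relation in S(Λ) is normal. -/
/-!
Apart from (2), every clause is a direct instance of the axioms of a lax extension, evaluated at
the identity `1_A ∈ A^A`. For (2), glue two copies of `A` along `φ`: this gives maps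
`f g : A → Z` whose kernel pair `g° · f` is the difunctional closure of `φ`. Composing `Λ(f°)`,
`Λφ` and `Λg` at the identity shows that `Λ1_Z` relates `f ∘ 1_A` to `g ∘ 1_A`, so normality of
`Λ` forces `f = g`, i.e. the closure is reflexive.
-/

open CategoryTheory Function

universe u

/-- The set `S(Λ) = { φ : A ⇸ A | 1_A (Λφ) 1_A }` of endorelations induced by a
relator `Λ` of `H_A`. -/
def SLam (A : Type u) (Λ : Relator (expFunctor A)) : Set (A → A → Prop) :=
  {φ | Λ.map φ (id : A → A) (id : A → A)}

section DifunClosure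

variable {X Y : Type u}

/-- The quotient of `X ⊕ Y` by this relation glues `X` and `Y` along `r`. -/
def difunGlue (r : X → Y → Prop) (p q : X ⊕ Y) : Prop :=
  ∃ x y, r x y ∧ p = Sum.inl x ∧ q = Sum.inr y

def difunClosure (r : X → Y → Prop) (x : X) (y : Y) : Prop :=
  Quot.mk (difunGlue r) (Sum.inl x) = Quot.mk (difunGlue r) (Sum.inr y)

theorem isDifunClosure_difunClosure (r : X → Y → Prop) : IsDifunClosure r (difunClosure r) := by
  refine ⟨⟨_, fun x => Quot.mk _ (Sum.inl x), fun y => Quot.mk _ (Sum.inr y), fun _ _ => Iff.rfl⟩,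
    fun x y hr => Quot.sound ⟨x, y, hr, rfl, rfl⟩, ?_⟩
  rintro d ⟨Z, f, g, hd⟩ hrd x y hc
  have hresp : ∀ p q, difunGlue r p q → Sum.elim f g p = Sum.elim f g q := by
    rintro _ _ ⟨a, b, hab, rfl, rfl⟩
    exact (hd a b).mp (hrd a b hab)
  exact (hd x y).mpr (congrArg (Quot.lift (Sum.elim f g) hresp) hc)

end DifunClosure

namespace IsLaxExtension

variable {F : Type u ⥤ Type u} {Λ : Relator F}

theorem map_eq_self (hlax : IsLaxExtension F Λ) {X : Type u} (u : F.obj X) :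
    Λ.map (@Eq X) u u :=
  (hlax.1 (id : X → X)).1 u u (by rw [show TypeCat.ofHom (id : X → X) = 𝟙 X from rfl]; simp)

theorem map_eq_map_of_le {X Y Z : Type u} (hlax : IsLaxExtension F Λ) {r : X → Y → Prop}
    {f : X → Z} {g : Y → Z} (hr : ∀ x y, r x y → f x = g y) {u : F.obj X} {v : F.obj Y}
    (h : Λ.map r u v) :
    Λ.map (@Eq Z) (F.map (TypeCat.ofHom f) u) (F.map (TypeCat.ofHom g) v) := by
  have hf : Λ.map (relConv (fgraph f)) (F.map (TypeCat.ofHom f) u) u := (hlax.1 f).2 _ u rfl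
  have hg : Λ.map (fgraph g) v (F.map (TypeCat.ofHom g) v) := (hlax.1 g).1 v _ rfl
  refine Λ.mono ?_ _ _ (hlax.2 _ _ _ _ ⟨v, hlax.2 _ _ _ _ ⟨u, hf, h⟩, hg⟩)
  rintro z _ ⟨y, ⟨x, rfl, hxy⟩, rfl⟩
  exact hr x y hxy

end IsLaxExtension

theorem SLam.eq_of_le_difunctional {A Z : Type u} {Λ : Relator (expFunctor A)}
    (hlax : IsLaxExtension (expFunctor A) Λ) (hnorm : IsNormal (expFunctor A) Λ)
    {φ : A → A → Prop} (hφ : φ ∈ SLam A Λ) {f g : A → Z} (hfg : ∀ a b, φ a b → f a = g b) :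
    f = g :=
  (hnorm Z f g).mp (hlax.map_eq_map_of_le hfg hφ)

/-- For a lax extension `Λ` of `H_A = (−)^A`, the set `S(Λ)` is an
upwards-closed submonoid of the monoid of endorelations on `A` under relational
composition. Moreover: (1) if `Λ` preserves converses then `S(Λ)` is closed under
converses; (2) if `Λ` is normal then every relation in `S(Λ)` is normal. -/
theorem stmt15 (A : Type u) (Λ : Relator (expFunctor A))
    (hlax : IsLaxExtension (expFunctor A) Λ) :
    ((@Eq A) ∈ SLam A Λ) ∧
    (∀ φ ψ : A → A → Prop, φ ∈ SLam A Λ → ψ ∈ SLam A Λ → relComp ψ φ ∈ SLam A Λ) ∧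
    (∀ φ ψ : A → A → Prop, φ ∈ SLam A Λ → (∀ a b, φ a b → ψ a b) → ψ ∈ SLam A Λ) ∧
    ((∀ (X Y : Type u) (r : X → Y → Prop)
        (g : (expFunctor A).obj Y) (f : (expFunctor A).obj X),
        Λ.map (relConv r) g f ↔ Λ.map r f g) →
      ∀ φ ∈ SLam A Λ, relConv φ ∈ SLam A Λ) ∧
    (IsNormal (expFunctor A) Λ → ∀ φ ∈ SLam A Λ, NormalRel φ) := by
  refine ⟨hlax.map_eq_self _, fun φ ψ hφ hψ => hlax.2 φ ψ _ _ ⟨id, hφ, hψ⟩,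
    fun φ ψ hφ hle => Λ.mono hle _ _ hφ, fun hconv φ hφ => (hconv A A φ id id).mpr hφ, ?_⟩
  intro hnorm φ hφ
  have hrefl := SLam.eq_of_le_difunctional hlax hnorm hφ (isDifunClosure_difunClosure φ).2.1
  exact ⟨difunClosure φ, isDifunClosure_difunClosure φ, congrFun hrefl⟩
end

section
/- Let F be a set functor admitting a terminal coalgebra (Z,γ), and let Λ be a relational connector of F. Then: (1) Λ-similarity is sound if and only if Λ1_Z = 1_{FZ}; (2) if moreover F preserves monomorphisms, then Λ-similarity is sound if and only if Λ1_A = 1_{FA} for every set A of cardinality at most |Z|. -/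
open CategoryTheory Function

universe u

/-- `(Z, γ)` is a terminal `F`-coalgebra. -/
def IsTerminalCoalg (F : Type u ⥤ Type u) {Z : Type u} (γ : Z → F.obj Z) : Prop :=
  ∀ (X : Type u) (α : X → F.obj X), ∃! f : X → Z, IsCoalgHom F α γ f

/-- `Λ`-similarity is sound: `Λ`-similar states are behaviourally equivalent. -/
def Sound (F : Type u ⥤ Type u) (Λ : Relator F) : Prop :=
  ∀ {X Y : Type u} (α : X → F.obj X) (β : Y → F.obj Y) (x : X) (y : Y),
    LSimilar Λ α β x y → BehEq F α β x y

/-!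
Every coalgebra maps uniquely into the terminal coalgebra `(Z, γ)`, and this map identifies
exactly the behaviourally equivalent states; moreover `γ` has a left inverse that is a
coalgebra homomorphism `(FZ, Fγ) → (Z, γ)` (Lambek).

If `Λ`-similarity is sound, apply it to `Λ1_Z`, which the connector laws make a simulation on
`(FZ, Fγ)`: `Λ1_Z`-related elements become behaviourally equivalent, hence equal.
Conversely, a simulation pushed forward along the homomorphisms into `Z` is a simulation `t`
on `(Z, γ)`. Choosing a representative `e z` of each `t`-class, `Λ1_Z = 1_{FZ}` and the
connector laws show that `Fe ∘ γ` identifies `t`-related states, so `e` is a homomorphism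
`(Z, γ) → (Z, Fe ∘ γ)` collapsing `t`; hence `t` consists of behaviourally equivalent pairs,
which in `Z` are equal. For the second part, the connector law transports `Λ1_Z = 1_{FZ}` along
an injection `A → Z` whose image under `F` is injective.
-/

variable {F : Type u ⥤ Type u} {Λ : Relator F}

def Relator.PreservesIdentity (Λ : Relator F) (X : Type u) : Prop :=
  ∀ u v : F.obj X, Λ.map (@Eq X) u v ↔ u = v

theorem isCoalgHom_id {X : Type u} (α : X → F.obj X) : IsCoalgHom F α α id := fun x =>
  (F.map_id_apply X (α x)).symm

theorem IsCoalgHom.comp {X Y W : Type u} {α : X → F.obj X} {β : Y → F.obj Y}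
    {δ : W → F.obj W} {f : X → Y} {g : Y → W} (hg : IsCoalgHom F β δ g)
    (hf : IsCoalgHom F α β f) : IsCoalgHom F α δ (g ∘ f) := fun x => by
  rw [comp_apply, hg, hf]
  exact (F.map_comp_apply (TypeCat.ofHom f) (TypeCat.ofHom g) (α x)).symm

theorem IsTerminalCoalg.eq_of_behEq {Z : Type u} {γ : Z → F.obj Z} (hterm : IsTerminalCoalg F γ)
    {X Y : Type u} {α : X → F.obj X} {β : Y → F.obj Y} {f : X → Z} {g : Y → Z}
    (hf : IsCoalgHom F α γ f) (hg : IsCoalgHom F β γ g) {x : X} {y : Y}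
    (h : BehEq F α β x y) : f x = g y := by
  obtain ⟨W, δ, p, q, hp, hq, hpq⟩ := h
  obtain ⟨k, hk, -⟩ := hterm W δ
  have hkp : k ∘ p = f := (hterm X α).unique (hk.comp hp) hf
  have hkq : k ∘ q = g := (hterm Y β).unique (hk.comp hq) hg
  rw [← hkp, ← hkq, comp_apply, hpq, comp_apply]

theorem IsTerminalCoalg.exists_leftInverse {Z : Type u} {γ : Z → F.obj Z}
    (hterm : IsTerminalCoalg F γ) :
    ∃ h : F.obj Z → Z, IsCoalgHom F (fun u => F.map (TypeCat.ofHom γ) u) γ h ∧ LeftInverse γ h := by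
  obtain ⟨h, hh, -⟩ := hterm (F.obj Z) (fun u => F.map (TypeCat.ofHom γ) u)
  have hγ : IsCoalgHom F γ (fun u => F.map (TypeCat.ofHom γ) u) γ := fun _ => rfl
  have hhγ : h ∘ γ = id := (hterm Z γ).unique (hh.comp hγ) (isCoalgHom_id γ)
  refine ⟨h, hh, fun u => ?_⟩
  calc γ (h u) = F.map (TypeCat.ofHom (h ∘ γ)) u := (hh u).trans (F.map_comp_apply _ _ u).symm
    _ = u := by rw [hhγ]; exact F.map_id_apply Z u

namespace IsRelConnector

variable (hconn : IsRelConnector F Λ)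
include hconn

theorem map_eq_of_map {X X' Y : Type u} (hY : Λ.PreservesIdentity Y) (g : X → Y) (g' : X' → Y)
    {r : X → X' → Prop} (hr : ∀ x x', r x x' → g x = g' x') {u : F.obj X} {v : F.obj X'}
    (h : Λ.map r u v) : F.map (TypeCat.ofHom g) u = F.map (TypeCat.ofHom g') v :=
  (hY _ _).mp ((hconn.2 (@Eq Y) g g' u v).mp (Λ.mono hr u v h))

theorem isSimulation_map_eq {X : Type u} (α : X → F.obj X) :
    IsSimulation Λ (fun u => F.map (TypeCat.ofHom α) u) (fun u => F.map (TypeCat.ofHom α) u)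
      (Λ.map (@Eq X)) := fun u v huv =>
  (hconn.2 _ α α u v).mp (Λ.mono (fun x _ hxy => hxy ▸ hconn.1 X (α x)) u v huv)

theorem isSimulation_relationMap {X Y X' Y' : Type u} {α : X → F.obj X} {β : Y → F.obj Y}
    {α' : X' → F.obj X'} {β' : Y' → F.obj Y'} {r : X → Y → Prop} (hr : IsSimulation Λ α β r)
    {f : X → X'} {g : Y → Y'} (hf : IsCoalgHom F α α' f) (hg : IsCoalgHom F β β' g) :
    IsSimulation Λ α' β' (Relation.Map r f g) := by
  rintro _ _ ⟨x, y, hxy, rfl, rfl⟩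
  rw [hf, hg]
  exact (hconn.2 _ f g _ _).mp (Λ.mono (fun x y h => ⟨x, y, h, rfl, rfl⟩) _ _ (hr x y hxy))

theorem behEq_of_isSimulation {X : Type u} (hX : Λ.PreservesIdentity X) {α : X → F.obj X}
    {t : X → X → Prop} (ht : IsSimulation Λ α α t) {x y : X} (hxy : t x y) :
    BehEq F α α x y := by
  let e : X → X := fun x => (Quot.mk t x).out
  have he : ∀ x y, t x y → e x = e y := fun x y h => congrArg Quot.out (Quot.sound h)
  have hresp : ∀ x y, t x y → F.map (TypeCat.ofHom e) (α x) = F.map (TypeCat.ofHom e) (α y) :=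
    fun x y h => hconn.map_eq_of_map hX e e he (ht x y h)
  have hhom : IsCoalgHom F α (fun x => F.map (TypeCat.ofHom e) (α x)) e := fun x =>
    congrArg (Quot.lift _ hresp) (Quot.out_eq (Quot.mk t x))
  exact ⟨X, _, e, e, hhom, hhom, he x y hxy⟩

theorem preservesIdentity_of_sound {Z : Type u} {γ : Z → F.obj Z} (hterm : IsTerminalCoalg F γ)
    (hs : Sound F Λ) : Λ.PreservesIdentity Z := fun u v => by
  refine ⟨fun huv => ?_, fun h => h ▸ hconn.1 Z u⟩
  obtain ⟨h, hh, hγh⟩ := hterm.exists_leftInverse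
  exact hγh.injective (hterm.eq_of_behEq hh hh (hs _ _ u v ⟨_, hconn.isSimulation_map_eq γ, huv⟩))

theorem sound_of_preservesIdentity {Z : Type u} {γ : Z → F.obj Z} (hterm : IsTerminalCoalg F γ)
    (hZ : Λ.PreservesIdentity Z) : Sound F Λ := by
  rintro X Y α β x y ⟨r, hr, hxy⟩
  obtain ⟨f, hf, -⟩ := hterm X α
  obtain ⟨g, hg, -⟩ := hterm Y β
  have hfg : BehEq F γ γ (f x) (g y) :=
    hconn.behEq_of_isSimulation hZ (hconn.isSimulation_relationMap hr hf hg) ⟨x, y, hxy, rfl, rfl⟩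
  exact ⟨Z, γ, f, g, hf, hg, hterm.eq_of_behEq (isCoalgHom_id γ) (isCoalgHom_id γ) hfg⟩

theorem preservesIdentity_of_injective {A Z : Type u} (hZ : Λ.PreservesIdentity Z) {i : A → Z}
    (hi : Injective (F.map (TypeCat.ofHom i))) : Λ.PreservesIdentity A := fun u _ =>
  ⟨fun h => hi (hconn.map_eq_of_map hZ i i (fun _ _ => congrArg i) h), fun h => h ▸ hconn.1 A u⟩

end IsRelConnector

/-- Let `F` admit a terminal coalgebra `(Z, γ)` and let `Λ` be a
relational connector of `F`. Then: (1) `Λ`-similarity is sound iff `Λ1_Z = 1_{FZ}`;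
(2) if `F` preserves monomorphisms, then `Λ`-similarity is sound iff
`Λ1_A = 1_{FA}` for every set `A` of cardinality at most `|Z|`. -/
theorem stmt18 (F : Type u ⥤ Type u) {Z : Type u} (γ : Z → F.obj Z)
    (hterm : IsTerminalCoalg F γ) (Λ : Relator F) (hconn : IsRelConnector F Λ) :
    (Sound F Λ ↔ ∀ u v : F.obj Z, Λ.map (@Eq Z) u v ↔ u = v)
    ∧
    ((∀ {X Y : Type u} (f : X → Y), Function.Injective f → Function.Injective (F.map (TypeCat.ofHom f))) →
      (Sound F Λ ↔
        ∀ A : Type u, (∃ e : A → Z, Function.Injective e) →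
          ∀ u v : F.obj A, Λ.map (@Eq A) u v ↔ u = v)) := by
  have sound_iff : Sound F Λ ↔ Λ.PreservesIdentity Z :=
    ⟨hconn.preservesIdentity_of_sound hterm, hconn.sound_of_preservesIdentity hterm⟩
  refine ⟨sound_iff, fun hmono => ⟨?_, fun hA => sound_iff.mpr (hA Z ⟨id, injective_id⟩)⟩⟩
  rintro hs A ⟨i, hi⟩
  exact hconn.preservesIdentity_of_injective (sound_iff.mp hs) (hmono i hi)
end
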